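/- arXiv:2305.12992 — 7 statements merged into one kernel-verified Lean document; each statement's English description precedes it below -/
import Mathlib

section
/- Deterministic core of the MLMC complexity theorem: let α, β, θ, c₁, c₂ > 0 satisfy α ≥ (1/2)·min{β, θ}. Then there exists a constant c₄ > 0 such that for every ε ∈ (0, e^{-1}) there exist L ∈ ℕ and positive integers N₀, …, N_L with c₁²·2^{−2αL} + Σ_{ℓ=0}^{L} c₂·N_ℓ^{−1}·2^{−βℓ} ≤ ε², while the total cost Σ_{ℓ=0}^{L} N_ℓ·2^{θℓ} is at most c₄·ε^{−2} if β > θ, at most c₄·ε^{−2}·(log(1/ε))² if β = θ, and at most c₄·ε^{−2−(θ−β)/α} if 0 < β < θ. -/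
/-!
Take the finest level `L` with `2 c₁² ε⁻² < 2^(2αL) ≤ 2^(2α) max(2 c₁² ε⁻², 1)`, so that the
squared bias is at most `ε²/2` while `2^(2αL) = O(ε⁻²)` and `L = O(log(1/ε))`. For a fixed `L`,
minimising the cost `∑ N_ℓ w_ℓ` subject to `∑ v_ℓ / N_ℓ ≤ ε²/2` gives `N_ℓ ∝ √(v_ℓ / w_ℓ)`;
rounding up costs at most `2 ε⁻² (∑ √(v_ℓ w_ℓ))² + ∑ w_ℓ`. With `v_ℓ = c₂ 2^(-βℓ)` and
`w_ℓ = 2^(θℓ)` the sum `∑_{ℓ ≤ L} √(v_ℓ w_ℓ)` is a geometric sum of ratio `2^((θ-β)/2)`: bounded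
if `β > θ`, equal to `√c₂ (L + 1)` if `β = θ`, and `O(2^((θ-β)L/2)) = O(ε^(-(θ-β)/(2α)))` if
`β < θ`. The rounding term `∑ w_ℓ = O(2^(θL)) = O(ε^(-θ/α))` is absorbed in each case because
`α ≥ min(β, θ)/2`.
-/

open Finset

lemma exists_lt_pow_le_mul {a x : ℝ} (ha : 1 < a) (hx : 1 ≤ x) :
    ∃ n : ℕ, x < a ^ n ∧ a ^ n ≤ a * x := by
  obtain ⟨n, hle, hlt⟩ := exists_nat_pow_near hx ha
  exact ⟨n + 1, hlt, by rw [pow_succ']; gcongr⟩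

lemma geom_sum_range_succ_le_of_one_lt {q : ℝ} (hq : 1 < q) (n : ℕ) :
    ∑ i ∈ range (n + 1), q ^ i ≤ q / (q - 1) * q ^ n := by
  rw [geom_sum_eq hq.ne', div_mul_eq_mul_div, ← pow_succ',
    div_le_div_iff_of_pos_right (by linarith)]
  linarith

lemma exists_sample_allocation {ι : Type*} (I : Finset ι) {v w s : ι → ℝ} {δ : ℝ} (hδ : 0 < δ)
    (hv : ∀ i ∈ I, 0 ≤ v i) (hw : ∀ i ∈ I, 0 < w i) (hs : ∀ i ∈ I, 0 < s i)
    (hvws : ∀ i ∈ I, v i * w i ≤ s i ^ 2) :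
    ∃ N : ι → ℕ, (∀ i ∈ I, 0 < N i) ∧ ∑ i ∈ I, v i / N i ≤ δ ∧
      ∑ i ∈ I, N i * w i ≤ (∑ i ∈ I, s i) ^ 2 / δ + ∑ i ∈ I, w i := by
  set S := ∑ i ∈ I, s i
  have hS : ∀ i ∈ I, 0 < S := fun i hi =>
    (hs i hi).trans_le (single_le_sum (fun j hj => (hs j hj).le) hi)
  -- Minimizing the cost under the variance constraint gives `N i ∝ √(v i / w i) = s i / w i`.
  set m : ι → ℝ := fun i => S / δ * s i / w i
  have hm : ∀ i ∈ I, 0 < m i := fun i hi => by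
    have := hS i hi; have := hs i hi; have := hw i hi; positivity
  refine ⟨fun i => ⌈m i⌉₊, fun i hi => Nat.ceil_pos.2 (hm i hi), ?_, ?_⟩
  · have hterm : ∀ i ∈ I, v i / ⌈m i⌉₊ ≤ δ / S * s i := by
      intro i hi
      have := hS i hi; have := hs i hi; have := hw i hi
      calc v i / ⌈m i⌉₊ ≤ v i / m i :=
            div_le_div_of_nonneg_left (hv i hi) (hm i hi) (Nat.le_ceil _)
        _ = δ / S * (v i * w i) / s i := by simp only [m]; field_simp
        _ ≤ δ / S * s i ^ 2 / s i := by gcongr; exact hvws i hi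
        _ = δ / S * s i := by field_simp
    calc ∑ i ∈ I, v i / ⌈m i⌉₊ ≤ ∑ i ∈ I, δ / S * s i := sum_le_sum hterm
      _ = δ * (S / S) := by rw [← mul_sum]; ring
      _ ≤ δ := mul_le_of_le_one_right hδ.le (div_self_le_one S)
  · have hterm : ∀ i ∈ I, (⌈m i⌉₊ : ℝ) * w i ≤ S / δ * s i + w i := by
      intro i hi
      have := hw i hi
      calc (⌈m i⌉₊ : ℝ) * w i ≤ (m i + 1) * w i := by
            gcongr; exact (Nat.ceil_lt_add_one (hm i hi).le).le
        _ = S / δ * s i + w i := by simp only [m]; field_simp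
    calc ∑ i ∈ I, (⌈m i⌉₊ : ℝ) * w i ≤ ∑ i ∈ I, (S / δ * s i + w i) := sum_le_sum hterm
      _ = S ^ 2 / δ + ∑ i ∈ I, w i := by rw [sum_add_distrib, ← mul_sum]; ring

lemma two_rpow_pow_le {α C ε p : ℝ} {L : ℕ} (hα : 0 < α) (hC : 0 ≤ C) (hε : 0 < ε) (hp : 0 ≤ p)
    (hL : ((2 : ℝ) ^ (2 * α)) ^ L ≤ C * ε ^ (-2 : ℝ)) :
    ((2 : ℝ) ^ p) ^ L ≤ C ^ (p / (2 * α)) * ε ^ (-(p / α)) := by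
  have h2p : (2 : ℝ) ^ p = ((2 : ℝ) ^ (2 * α)) ^ (p / (2 * α)) := by
    rw [← Real.rpow_mul zero_le_two]; congr 1; field_simp
  rw [h2p, Real.rpow_pow_comm (by positivity)]
  calc (((2 : ℝ) ^ (2 * α)) ^ L) ^ (p / (2 * α)) ≤ (C * ε ^ (-2 : ℝ)) ^ (p / (2 * α)) := by
        gcongr
    _ = C ^ (p / (2 * α)) * ε ^ (-(p / α)) := by
        rw [Real.mul_rpow hC (by positivity), ← Real.rpow_mul hε.le]
        congr 2; field_simp

lemma natCast_add_one_le_mul_log {a C ε : ℝ} {L : ℕ} (ha : 1 < a) (hC : 1 ≤ C) (hε : 0 < ε)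
    (hlog : 1 ≤ Real.log (1 / ε)) (hL : a ^ L ≤ C * ε ^ (-2 : ℝ)) :
    (L : ℝ) + 1 ≤ ((Real.log C + 2) / Real.log a + 1) * Real.log (1 / ε) := by
  have hloga : 0 < Real.log a := Real.log_pos ha
  have hlogC : 0 ≤ Real.log C := Real.log_nonneg hC
  have h := Real.log_le_log (by positivity) hL
  rw [Real.log_pow, Real.log_mul (by positivity) (by positivity), Real.log_rpow hε,
    ← neg_neg (Real.log ε), ← Real.log_inv, ← one_div] at h
  have hL' : (L : ℝ) ≤ (Real.log C + 2) / Real.log a * Real.log (1 / ε) := by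
    rw [div_mul_eq_mul_div, le_div_iff₀ hloga]
    nlinarith
  linarith

section MLMC

variable (α β θ c₁ c₂ : ℝ)

def MLMCFeasible (ε cost : ℝ) (L : ℕ) : Prop :=
  ∃ N : ℕ → ℕ, (∀ ℓ ≤ L, 0 < N ℓ) ∧
    c₁ ^ 2 * (2 : ℝ) ^ (-(2 * α) * (L : ℝ))
        + ∑ ℓ ∈ range (L + 1), c₂ * ((N ℓ : ℝ))⁻¹ * (2 : ℝ) ^ (-β * (ℓ : ℝ)) ≤ ε ^ 2 ∧
    ∑ ℓ ∈ range (L + 1), (N ℓ : ℝ) * (2 : ℝ) ^ (θ * (ℓ : ℝ)) ≤ cost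

variable {α β θ c₁ c₂}

lemma MLMCFeasible.mono {ε cost cost' : ℝ} {L : ℕ} (h : MLMCFeasible α β θ c₁ c₂ ε cost L)
    (hcost : cost ≤ cost') : MLMCFeasible α β θ c₁ c₂ ε cost' L :=
  let ⟨N, hN, herr, hc⟩ := h
  ⟨N, hN, herr, hc.trans hcost⟩

variable (c₁)

lemma exists_level_bias_le (hα : 0 < α) {ε : ℝ} (hε : 0 < ε) (hε1 : ε ≤ 1) :
    ∃ L : ℕ, c₁ ^ 2 * (2 : ℝ) ^ (-(2 * α) * (L : ℝ)) ≤ ε ^ 2 / 2 ∧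
      ((2 : ℝ) ^ (2 * α)) ^ L ≤ (2 : ℝ) ^ (2 * α) * max (2 * c₁ ^ 2) 1 * ε ^ (-2 : ℝ) := by
  have ha : 1 < (2 : ℝ) ^ (2 * α) := Real.one_lt_rpow one_lt_two (by positivity)
  obtain ⟨L, hbias, hlevel⟩ := exists_lt_pow_le_mul ha (le_max_right (2 * c₁ ^ 2 / ε ^ 2) 1)
  refine ⟨L, ?_, hlevel.trans ?_⟩
  · have hbias' := (le_max_left _ _).trans hbias.le
    rw [div_le_iff₀ (by positivity)] at hbias'
    rw [neg_mul, Real.rpow_neg zero_le_two, Real.rpow_mul_natCast zero_le_two,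
      mul_inv_le_iff₀ (by positivity)]
    linarith
  · have hε2 : 1 ≤ (ε ^ 2)⁻¹ := one_le_inv₀ (by positivity) |>.2 (pow_le_one₀ hε.le hε1)
    rw [mul_assoc, Real.rpow_neg_ofNat, zpow_neg, zpow_ofNat]
    gcongr
    refine max_le ?_ (one_le_mul_of_one_le_of_one_le (le_max_right _ _) hε2)
    rw [div_eq_mul_inv]; gcongr; exact le_max_left _ _

lemma exists_mlmc_sample_sizes (hθ : 0 < θ) (hc₂ : 0 < c₂) {ε : ℝ} (hε : 0 < ε) (L : ℕ) :
    ∃ N : ℕ → ℕ, (∀ ℓ ≤ L, 0 < N ℓ) ∧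
      ∑ ℓ ∈ range (L + 1), c₂ * ((N ℓ : ℝ))⁻¹ * (2 : ℝ) ^ (-β * (ℓ : ℝ)) ≤ ε ^ 2 / 2 ∧
      ∑ ℓ ∈ range (L + 1), (N ℓ : ℝ) * (2 : ℝ) ^ (θ * (ℓ : ℝ)) ≤
        2 * c₂ * ε ^ (-2 : ℝ) * (∑ ℓ ∈ range (L + 1), ((2 : ℝ) ^ ((θ - β) / 2)) ^ ℓ) ^ 2
          + (2 : ℝ) ^ θ / ((2 : ℝ) ^ θ - 1) * ((2 : ℝ) ^ θ) ^ L := by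
  have hvws : ∀ ℓ : ℕ, c₂ * ((2 : ℝ) ^ (-β)) ^ ℓ * ((2 : ℝ) ^ θ) ^ ℓ
      = (√c₂ * ((2 : ℝ) ^ ((θ - β) / 2)) ^ ℓ) ^ 2 := by
    have hq : (2 : ℝ) ^ (-β) * (2 : ℝ) ^ θ = ((2 : ℝ) ^ ((θ - β) / 2)) ^ 2 := by
      rw [← Real.rpow_add two_pos, ← Real.rpow_natCast, ← Real.rpow_mul zero_le_two]
      norm_num; ring_nf
    intro ℓ
    rw [mul_pow, Real.sq_sqrt hc₂.le, ← pow_right_comm, mul_assoc, ← mul_pow, hq]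
  obtain ⟨N, hN, hvar, hcost⟩ := exists_sample_allocation (range (L + 1))
    (v := fun ℓ => c₂ * ((2 : ℝ) ^ (-β)) ^ ℓ) (w := fun ℓ => ((2 : ℝ) ^ θ) ^ ℓ)
    (s := fun ℓ => √c₂ * ((2 : ℝ) ^ ((θ - β) / 2)) ^ ℓ) (δ := ε ^ 2 / 2) (by positivity)
    (fun _ _ => by positivity) (fun _ _ => by positivity) (fun _ _ => by positivity)
    (fun ℓ _ => (hvws ℓ).le)
  refine ⟨N, fun ℓ hℓ => hN ℓ (mem_range_succ_iff.2 hℓ), ?_, ?_⟩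
  · convert hvar using 2 with ℓ
    rw [Real.rpow_mul_natCast zero_le_two]; ring
  · simp only [Real.rpow_mul_natCast zero_le_two]
    refine hcost.trans (add_le_add (le_of_eq ?_)
      (geom_sum_range_succ_le_of_one_lt (Real.one_lt_rpow one_lt_two hθ) L))
    rw [← mul_sum, mul_pow, Real.sq_sqrt hc₂.le, Real.rpow_neg_ofNat, zpow_neg, zpow_ofNat]
    field_simp

lemma exists_mlmcFeasible (hα : 0 < α) (hθ : 0 < θ) (hc₂ : 0 < c₂) :
    ∃ C B : ℝ, 1 ≤ C ∧ 0 < B ∧ ∀ ε, 0 < ε → ε ≤ 1 → ∃ L : ℕ,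
      ((2 : ℝ) ^ (2 * α)) ^ L ≤ C * ε ^ (-2 : ℝ) ∧
      MLMCFeasible α β θ c₁ c₂ ε (2 * c₂ * ε ^ (-2 : ℝ) *
        (∑ ℓ ∈ range (L + 1), ((2 : ℝ) ^ ((θ - β) / 2)) ^ ℓ) ^ 2 + B * ε ^ (-(θ / α))) L := by
  set C := (2 : ℝ) ^ (2 * α) * max (2 * c₁ ^ 2) 1
  have hC : 1 ≤ C := one_le_mul_of_one_le_of_one_le
    (Real.one_le_rpow one_le_two (by positivity)) (le_max_right _ _)
  have h2θ : 0 < (2 : ℝ) ^ θ - 1 := sub_pos.2 (Real.one_lt_rpow one_lt_two hθ)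
  refine ⟨C, 2 ^ θ / (2 ^ θ - 1) * C ^ (θ / (2 * α)), hC, by positivity, fun ε hε hε1 => ?_⟩
  obtain ⟨L, hbias, hL⟩ := exists_level_bias_le c₁ hα hε hε1
  obtain ⟨N, hN, hvar, hcost⟩ := exists_mlmc_sample_sizes (β := β) hθ hc₂ hε L
  refine ⟨L, hL, N, hN, by linarith, hcost.trans ?_⟩
  rw [mul_assoc _ (C ^ _)]
  gcongr
  exact two_rpow_pow_le hα (by linarith) hε hθ.le hL

lemma exists_mlmcFeasible_of_lt (hα : 0 < α) (hθ : 0 < θ) (hc₂ : 0 < c₂)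
    (hθβ : θ < β) (hθα : θ ≤ 2 * α) :
    ∃ c₄ : ℝ, 0 < c₄ ∧ ∀ ε, 0 < ε → ε < 1 → ∃ L : ℕ,
      MLMCFeasible α β θ c₁ c₂ ε (c₄ * ε ^ (-2 : ℝ)) L := by
  obtain ⟨C, B, -, hB, h⟩ := exists_mlmcFeasible (β := β) c₁ hα hθ hc₂
  set q := (2 : ℝ) ^ ((θ - β) / 2)
  have hq1 : q < 1 := Real.rpow_lt_one_of_one_lt_of_neg one_lt_two (by linarith)
  have hq : 0 < 1 - q := sub_pos.2 hq1
  refine ⟨2 * c₂ * (1 / (1 - q)) ^ 2 + B, by positivity, fun ε hε hε1 => ?_⟩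
  obtain ⟨L, -, hL⟩ := h ε hε hε1.le
  refine ⟨L, hL.mono ?_⟩
  have hS : ∑ ℓ ∈ range (L + 1), q ^ ℓ ≤ 1 / (1 - q) := by
    rw [range_eq_Ico, ← pow_zero q]
    exact geom_sum_Ico_le_of_lt_one (by positivity) hq1
  have hεθ : ε ^ (-(θ / α)) ≤ ε ^ (-2 : ℝ) := Real.rpow_le_rpow_of_exponent_ge hε hε1.le
    (by rw [neg_le_neg_iff, div_le_iff₀ hα]; linarith)
  calc _ ≤ 2 * c₂ * ε ^ (-2 : ℝ) * (1 / (1 - q)) ^ 2 + B * ε ^ (-2 : ℝ) := by gcongr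
    _ = _ := by ring

lemma exists_mlmcFeasible_of_eq (hα : 0 < α) (hθ : 0 < θ) (hc₂ : 0 < c₂)
    (hθα : θ ≤ 2 * α) :
    ∃ c₄ : ℝ, 0 < c₄ ∧ ∀ ε, 0 < ε → ε < Real.exp (-1) → ∃ L : ℕ,
      MLMCFeasible α θ θ c₁ c₂ ε (c₄ * ε ^ (-2 : ℝ) * Real.log (1 / ε) ^ 2) L := by
  obtain ⟨C, B, hC, hB, h⟩ := exists_mlmcFeasible (β := θ) c₁ hα hθ hc₂
  have ha : 1 < (2 : ℝ) ^ (2 * α) := Real.one_lt_rpow one_lt_two (by positivity)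
  set A := (Real.log C + 2) / Real.log ((2 : ℝ) ^ (2 * α)) + 1
  have hA : 0 < A := by
    have := Real.log_pos ha; have := Real.log_nonneg hC; positivity
  refine ⟨2 * c₂ * A ^ 2 + B, by positivity, fun ε hε hεe => ?_⟩
  have hε1 : ε < 1 := hεe.trans (Real.exp_lt_one_iff.2 (by norm_num))
  have hlog : 1 ≤ Real.log (1 / ε) := by
    have := Real.log_lt_log hε hεe
    rw [Real.log_exp] at this
    rw [one_div, Real.log_inv]; linarith
  obtain ⟨L, hLC, hL⟩ := h ε hε hε1.le
  refine ⟨L, hL.mono ?_⟩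
  have hS : ∑ ℓ ∈ range (L + 1), ((2 : ℝ) ^ ((θ - θ) / 2)) ^ ℓ ≤ A * Real.log (1 / ε) := by
    simpa using natCast_add_one_le_mul_log ha hC hε hlog hLC
  have hεθ : ε ^ (-(θ / α)) ≤ ε ^ (-2 : ℝ) * Real.log (1 / ε) ^ 2 :=
    (Real.rpow_le_rpow_of_exponent_ge hε hε1.le
      (by rw [neg_le_neg_iff, div_le_iff₀ hα]; linarith)).trans
    (le_mul_of_one_le_right (by positivity) (one_le_pow₀ hlog))
  calc _ ≤ 2 * c₂ * ε ^ (-2 : ℝ) * (A * Real.log (1 / ε)) ^ 2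
        + B * (ε ^ (-2 : ℝ) * Real.log (1 / ε) ^ 2) := by gcongr
    _ = _ := by ring

lemma exists_mlmcFeasible_of_gt (hα : 0 < α) (hθ : 0 < θ) (hc₂ : 0 < c₂)
    (hβθ : β < θ) (hβα : β ≤ 2 * α) :
    ∃ c₄ : ℝ, 0 < c₄ ∧ ∀ ε, 0 < ε → ε < 1 → ∃ L : ℕ,
      MLMCFeasible α β θ c₁ c₂ ε (c₄ * ε ^ (-2 - (θ - β) / α)) L := by
  obtain ⟨C, B, hC, hB, h⟩ := exists_mlmcFeasible (β := β) c₁ hα hθ hc₂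
  set q := (2 : ℝ) ^ ((θ - β) / 2)
  have hq1 : 1 < q := Real.one_lt_rpow one_lt_two (by linarith)
  have hq : 0 < q - 1 := sub_pos.2 hq1
  set p := (θ - β) / α
  refine ⟨2 * c₂ * (q / (q - 1)) ^ 2 * C ^ ((θ - β) / (2 * α)) + B, by positivity,
    fun ε hε hε1 => ?_⟩
  obtain ⟨L, hLC, hL⟩ := h ε hε hε1.le
  refine ⟨L, hL.mono ?_⟩
  have hq2 : q ^ 2 = (2 : ℝ) ^ (θ - β) := by
    rw [← Real.rpow_natCast, ← Real.rpow_mul zero_le_two]; norm_num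
  have hS : (∑ ℓ ∈ range (L + 1), q ^ ℓ) ^ 2
      ≤ (q / (q - 1)) ^ 2 * (C ^ ((θ - β) / (2 * α)) * ε ^ (-p)) := by
    calc (∑ ℓ ∈ range (L + 1), q ^ ℓ) ^ 2 ≤ (q / (q - 1) * q ^ L) ^ 2 := by
          gcongr; exact geom_sum_range_succ_le_of_one_lt hq1 L
      _ = (q / (q - 1)) ^ 2 * ((2 : ℝ) ^ (θ - β)) ^ L := by rw [mul_pow, pow_right_comm, hq2]
      _ ≤ _ := by
          gcongr
          exact two_rpow_pow_le hα (by linarith) hε (by linarith) hLC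
  have hεθ : ε ^ (-(θ / α)) ≤ ε ^ (-2 - p) := Real.rpow_le_rpow_of_exponent_ge hε hε1.le (by
    have : β / α ≤ 2 := by rw [div_le_iff₀ hα]; linarith
    have : θ / α = p + β / α := by simp only [p]; ring
    linarith)
  have hsplit : ε ^ (-2 - p) = ε ^ (-2 : ℝ) * ε ^ (-p) := by
    rw [sub_eq_add_neg, Real.rpow_add hε]
  calc _ ≤ 2 * c₂ * ε ^ (-2 : ℝ) * ((q / (q - 1)) ^ 2 * (C ^ ((θ - β) / (2 * α)) * ε ^ (-p)))
        + B * ε ^ (-2 - p) := by gcongr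
    _ = _ := by rw [hsplit]; ring

end MLMC

theorem mlmc_complexity_deterministic_general
    (α β θ c₁ c₂ : ℝ) (hα : 0 < α) (hθ : 0 < θ)
    (hc₂ : 0 < c₂) (hαβθ : (1 / 2) * min β θ ≤ α) :
    ∃ c₄ : ℝ, 0 < c₄ ∧
      ∀ ε : ℝ, 0 < ε → ε < Real.exp (-1) →
        ∃ (L : ℕ) (Nl : ℕ → ℕ),
          (∀ ℓ ≤ L, 0 < Nl ℓ) ∧
          c₁ ^ 2 * (2 : ℝ) ^ (-(2 * α) * (L : ℝ))
              + ∑ ℓ ∈ Finset.range (L + 1),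
                  c₂ * ((Nl ℓ : ℝ))⁻¹ * (2 : ℝ) ^ (-β * (ℓ : ℝ)) ≤ ε ^ 2 ∧
          (θ < β →
            ∑ ℓ ∈ Finset.range (L + 1), (Nl ℓ : ℝ) * (2 : ℝ) ^ (θ * (ℓ : ℝ))
              ≤ c₄ * ε ^ (-2 : ℝ)) ∧
          (β = θ →
            ∑ ℓ ∈ Finset.range (L + 1), (Nl ℓ : ℝ) * (2 : ℝ) ^ (θ * (ℓ : ℝ))
              ≤ c₄ * ε ^ (-2 : ℝ) * (Real.log (1 / ε)) ^ 2) ∧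
          (β < θ →
            ∑ ℓ ∈ Finset.range (L + 1), (Nl ℓ : ℝ) * (2 : ℝ) ^ (θ * (ℓ : ℝ))
              ≤ c₄ * ε ^ (-2 - (θ - β) / α)) := by
  have hexp : Real.exp (-1) < 1 := Real.exp_lt_one_iff.2 (by norm_num)
  rcases lt_trichotomy θ β with hθβ | rfl | hβθ
  · rw [min_eq_right hθβ.le] at hαβθ
    obtain ⟨c₄, hc₄, h⟩ := exists_mlmcFeasible_of_lt c₁ hα hθ hc₂ hθβ (by linarith)
    refine ⟨c₄, hc₄, fun ε hε hεe => ?_⟩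
    obtain ⟨L, N, hN, herr, hcost⟩ := h ε hε (hεe.trans hexp)
    exact ⟨L, N, hN, herr, fun _ => hcost, fun h => absurd h hθβ.ne',
      fun h => absurd h hθβ.not_gt⟩
  · rw [min_self] at hαβθ
    obtain ⟨c₄, hc₄, h⟩ := exists_mlmcFeasible_of_eq c₁ hα hθ hc₂ (by linarith)
    refine ⟨c₄, hc₄, fun ε hε hεe => ?_⟩
    obtain ⟨L, N, hN, herr, hcost⟩ := h ε hε hεe
    exact ⟨L, N, hN, herr, fun h => absurd h (lt_irrefl θ), fun _ => hcost,
      fun h => absurd h (lt_irrefl θ)⟩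
  · rw [min_eq_left hβθ.le] at hαβθ
    obtain ⟨c₄, hc₄, h⟩ := exists_mlmcFeasible_of_gt c₁ hα hθ hc₂ hβθ (by linarith)
    refine ⟨c₄, hc₄, fun ε hε hεe => ?_⟩
    obtain ⟨L, N, hN, herr, hcost⟩ := h ε hε (hεe.trans hexp)
    exact ⟨L, N, hN, herr, fun h => absurd h hβθ.not_gt, fun h => absurd h hβθ.ne,
      fun _ => hcost⟩

/-- Deterministic core of the MLMC complexity theorem. -/
theorem mlmc_complexity_deterministic
    (α β θ c₁ c₂ : ℝ) (hα : 0 < α) (hβ : 0 < β) (hθ : 0 < θ)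
    (hc₁ : 0 < c₁) (hc₂ : 0 < c₂) (hαβθ : (1 / 2) * min β θ ≤ α) :
    ∃ c₄ : ℝ, 0 < c₄ ∧
      ∀ ε : ℝ, 0 < ε → ε < Real.exp (-1) →
        ∃ (L : ℕ) (Nl : ℕ → ℕ),
          (∀ ℓ ≤ L, 0 < Nl ℓ) ∧
          c₁ ^ 2 * (2 : ℝ) ^ (-(2 * α) * (L : ℝ))
              + ∑ ℓ ∈ Finset.range (L + 1),
                  c₂ * ((Nl ℓ : ℝ))⁻¹ * (2 : ℝ) ^ (-β * (ℓ : ℝ)) ≤ ε ^ 2 ∧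
          (θ < β →
            ∑ ℓ ∈ Finset.range (L + 1), (Nl ℓ : ℝ) * (2 : ℝ) ^ (θ * (ℓ : ℝ))
              ≤ c₄ * ε ^ (-2 : ℝ)) ∧
          (β = θ →
            ∑ ℓ ∈ Finset.range (L + 1), (Nl ℓ : ℝ) * (2 : ℝ) ^ (θ * (ℓ : ℝ))
              ≤ c₄ * ε ^ (-2 : ℝ) * (Real.log (1 / ε)) ^ 2) ∧
          (β < θ →
            ∑ ℓ ∈ Finset.range (L + 1), (Nl ℓ : ℝ) * (2 : ℝ) ^ (θ * (ℓ : ℝ))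
              ≤ c₄ * ε ^ (-2 - (θ - β) / α)) :=
  mlmc_complexity_deterministic_general α β θ c₁ c₂ hα hθ hc₂ hαβθ
end

section
/- Let d ∈ ℕ (d ≥ 1), γ ∈ [1,∞), C > 0 and let σ : ℝ^d → ℝ^d be continuously differentiable such that ‖(Dσ(x) − Dσ(x̃))y‖² ≤ C·(1+‖x‖+‖x̃‖)^{γ−3}·‖x−x̃‖²·‖y‖² for all x, x̃, y ∈ ℝ^d. Then there exists a constant C' > 0, depending only on C, γ, ‖σ(0)‖ and ‖Dσ(0)‖, such that for all x, x̃, y ∈ ℝ^d: ‖Dσ(x)y‖² ≤ C'·(1+‖x‖)^{γ−1}·‖y‖², ‖σ(x) − σ(x̃)‖² ≤ C'·(1+‖x‖+‖x̃‖)^{γ−1}·‖x−x̃‖², and ‖σ(x)‖² ≤ C'·(1+‖x‖)^{γ+1}. -/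
/-!
Comparing `Dσ x` with `Dσ 0` and using `‖x‖² ≤ (1 + ‖x‖)²` turns the assumed Hölder-type
bound into `‖Dσ(x) y‖² ≲ (1 + ‖x‖)^(γ-1) ‖y‖²`; the exponent `γ - 1 ≥ 0` lets the constant
term `‖Dσ(0) y‖²` be absorbed. The mean value inequality on the ball of radius `‖x‖ + ‖x̃‖`
then gives the local Lipschitz bound, and comparing `σ x` with `σ 0` in the same way gives
the growth bound with exponent `γ + 1`.
-/

open Metric

lemma one_add_rpow_mul_sq_le {r : ℝ} (hr : 0 ≤ r) (a : ℝ) :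
    (1 + r) ^ a * r ^ 2 ≤ (1 + r) ^ (a + 2) := by
  have hpos : 0 < 1 + r := by linarith
  calc (1 + r) ^ a * r ^ 2 ≤ (1 + r) ^ a * (1 + r) ^ (2 : ℝ) := by
        rw [Real.rpow_two]
        gcongr
        linarith
    _ = (1 + r) ^ (a + 2) := (Real.rpow_add hpos a 2).symm

lemma sq_norm_le_of_sq_norm_sub_le_one_add_rpow {F : Type*} [SeminormedAddCommGroup F]
    {u v : F} {r a A B : ℝ} (hr : 0 ≤ r) (ha : 0 ≤ a + 2) (hA : 0 ≤ A) (hv : ‖v‖ ^ 2 ≤ B)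
    (huv : ‖u - v‖ ^ 2 ≤ A * (1 + r) ^ a * r ^ 2) :
    ‖u‖ ^ 2 ≤ (2 * B + 2 * A) * (1 + r) ^ (a + 2) := by
  have hw : 1 ≤ (1 + r) ^ (a + 2) := Real.one_le_rpow (by linarith) ha
  have hB : 0 ≤ B := (sq_nonneg _).trans hv
  have hsub : ‖u - v‖ ^ 2 ≤ A * (1 + r) ^ (a + 2) := by
    calc ‖u - v‖ ^ 2 ≤ A * ((1 + r) ^ a * r ^ 2) := by linarith
      _ ≤ A * (1 + r) ^ (a + 2) := by gcongr; exact one_add_rpow_mul_sq_le hr a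
  have htri : ‖u‖ ≤ ‖v‖ + ‖u - v‖ := norm_le_insert' u v
  calc ‖u‖ ^ 2 ≤ (‖v‖ + ‖u - v‖) ^ 2 := by gcongr
    _ ≤ 2 * (‖v‖ ^ 2 + ‖u - v‖ ^ 2) := add_sq_le
    _ ≤ 2 * (B * (1 + r) ^ (a + 2) + A * (1 + r) ^ (a + 2)) := by
        gcongr
        nlinarith
    _ = (2 * B + 2 * A) * (1 + r) ^ (a + 2) := by ring

section

variable {E F : Type*} [NormedAddCommGroup E] [NormedSpace ℝ E]
  [NormedAddCommGroup F] [NormedSpace ℝ F]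

lemma ContinuousLinearMap.opNorm_le_sqrt_of_sq_norm_apply_le (T : E →L[ℝ] F) {M : ℝ}
    (h : ∀ y, ‖T y‖ ^ 2 ≤ M * ‖y‖ ^ 2) : ‖T‖ ≤ √M :=
  T.opNorm_le_bound (Real.sqrt_nonneg M) fun y => by
    rw [← Real.sqrt_sq (norm_nonneg (T y)), ← Real.sqrt_sq (norm_nonneg y), ← Real.sqrt_mul']
    · exact Real.sqrt_le_sqrt (h y)
    · positivity

lemma sq_norm_apply_le_of_sq_norm_sub_apply_le {g : E → E →L[ℝ] F} {γ C : ℝ} (hγ : 1 ≤ γ)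
    (hC : 0 ≤ C)
    (hg : ∀ x y, ‖(g x - g 0) y‖ ^ 2 ≤ C * (1 + ‖x‖) ^ (γ - 3) * ‖x‖ ^ 2 * ‖y‖ ^ 2)
    (x y : E) :
    ‖g x y‖ ^ 2 ≤ (2 * ‖g 0‖ ^ 2 + 2 * C) * (1 + ‖x‖) ^ (γ - 1) * ‖y‖ ^ 2 := by
  have h0 : ‖g 0 y‖ ^ 2 ≤ ‖g 0‖ ^ 2 * ‖y‖ ^ 2 := by
    rw [← mul_pow]
    gcongr
    exact (g 0).le_opNorm y
  have hsub : ‖g x y - g 0 y‖ ^ 2 ≤ C * ‖y‖ ^ 2 * (1 + ‖x‖) ^ (γ - 3) * ‖x‖ ^ 2 := by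
    have := hg x y
    rw [sub_apply] at this
    linarith
  have := sq_norm_le_of_sq_norm_sub_le_one_add_rpow (norm_nonneg x) (by linarith)
    (by positivity) h0 hsub
  rw [show γ - 3 + 2 = γ - 1 by ring] at this
  linarith

lemma sq_norm_sub_le_of_sq_norm_fderiv_apply_le {f : E → F} (hf : Differentiable ℝ f)
    {γ K : ℝ} (hγ : 1 ≤ γ) (hK : 0 ≤ K)
    (hf' : ∀ z y, ‖fderiv ℝ f z y‖ ^ 2 ≤ K * (1 + ‖z‖) ^ (γ - 1) * ‖y‖ ^ 2) (x xt : E) :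
    ‖f x - f xt‖ ^ 2 ≤ K * (1 + ‖x‖ + ‖xt‖) ^ (γ - 1) * ‖x - xt‖ ^ 2 := by
  have hderiv : ∀ z ∈ closedBall (0 : E) (‖x‖ + ‖xt‖),
      ‖fderiv ℝ f z‖ ≤ √(K * (1 + ‖x‖ + ‖xt‖) ^ (γ - 1)) := by
    intro z hz
    rw [mem_closedBall_zero_iff] at hz
    refine (fderiv ℝ f z).opNorm_le_sqrt_of_sq_norm_apply_le fun y => (hf' z y).trans ?_
    have hw : (1 + ‖z‖) ^ (γ - 1) ≤ (1 + ‖x‖ + ‖xt‖) ^ (γ - 1) :=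
      Real.rpow_le_rpow (by positivity) (by linarith) (by linarith)
    gcongr
  have hmvt := (convex_closedBall (0 : E) _).norm_image_sub_le_of_norm_fderiv_le
    (fun z _ => hf z) hderiv
    (mem_closedBall_zero_iff.2 (le_add_of_nonneg_left (norm_nonneg x)))
    (mem_closedBall_zero_iff.2 (le_add_of_nonneg_right (norm_nonneg xt)))
  calc ‖f x - f xt‖ ^ 2 ≤ (√(K * (1 + ‖x‖ + ‖xt‖) ^ (γ - 1)) * ‖x - xt‖) ^ 2 := by
        gcongr
    _ = K * (1 + ‖x‖ + ‖xt‖) ^ (γ - 1) * ‖x - xt‖ ^ 2 := by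
        rw [mul_pow, Real.sq_sqrt (by positivity)]

end

theorem diffusion_growth_of_deriv_difference_bound_general
    (d : ℕ) (γ C : ℝ) (hγ : 1 ≤ γ) (hC : 0 < C)
    (σ : EuclideanSpace ℝ (Fin d) → EuclideanSpace ℝ (Fin d))
    (hσ : ContDiff ℝ 1 σ)
    (hbound : ∀ x xt y : EuclideanSpace ℝ (Fin d),
      ‖(fderiv ℝ σ x - fderiv ℝ σ xt) y‖ ^ 2
        ≤ C * (1 + ‖x‖ + ‖xt‖) ^ (γ - 3) * ‖x - xt‖ ^ 2 * ‖y‖ ^ 2) :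
    ∃ C' : ℝ, 0 < C' ∧
      ∀ x xt y : EuclideanSpace ℝ (Fin d),
        ‖fderiv ℝ σ x y‖ ^ 2 ≤ C' * (1 + ‖x‖) ^ (γ - 1) * ‖y‖ ^ 2 ∧
        ‖σ x - σ xt‖ ^ 2 ≤ C' * (1 + ‖x‖ + ‖xt‖) ^ (γ - 1) * ‖x - xt‖ ^ 2 ∧
        ‖σ x‖ ^ 2 ≤ C' * (1 + ‖x‖) ^ (γ + 1) := by
  set K := 2 * ‖fderiv ℝ σ 0‖ ^ 2 + 2 * C
  have hK : 0 < K := by positivity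
  have hderiv := sq_norm_apply_le_of_sq_norm_sub_apply_le hγ hC.le
    (fun x y => by simpa using hbound x 0 y)
  have hlip := sq_norm_sub_le_of_sq_norm_fderiv_apply_le (hσ.differentiable one_ne_zero)
    hγ hK.le hderiv
  have hKle : K ≤ 2 * ‖σ 0‖ ^ 2 + 2 * K := by nlinarith [sq_nonneg ‖σ 0‖]
  refine ⟨2 * ‖σ 0‖ ^ 2 + 2 * K, by positivity, fun x xt y => ⟨?_, ?_, ?_⟩⟩
  · exact (hderiv x y).trans (by gcongr)
  · exact (hlip x xt).trans (by gcongr)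
  · have hgrowth := sq_norm_le_of_sq_norm_sub_le_one_add_rpow (norm_nonneg x)
      (by linarith : 0 ≤ γ - 1 + 2) hK.le le_rfl (by simpa using hlip x 0)
    rwa [show γ - 1 + 2 = γ + 1 by ring] at hgrowth

/-- Consequences of the squared polynomial-Hölder condition on the derivative
of a diffusion coefficient column `σ`. -/
theorem diffusion_growth_of_deriv_difference_bound
    (d : ℕ) (hd : 1 ≤ d) (γ C : ℝ) (hγ : 1 ≤ γ) (hC : 0 < C)
    (σ : EuclideanSpace ℝ (Fin d) → EuclideanSpace ℝ (Fin d))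
    (hσ : ContDiff ℝ 1 σ)
    (hbound : ∀ x xt y : EuclideanSpace ℝ (Fin d),
      ‖(fderiv ℝ σ x - fderiv ℝ σ xt) y‖ ^ 2
        ≤ C * (1 + ‖x‖ + ‖xt‖) ^ (γ - 3) * ‖x - xt‖ ^ 2 * ‖y‖ ^ 2) :
    ∃ C' : ℝ, 0 < C' ∧
      ∀ x xt y : EuclideanSpace ℝ (Fin d),
        ‖fderiv ℝ σ x y‖ ^ 2 ≤ C' * (1 + ‖x‖) ^ (γ - 1) * ‖y‖ ^ 2 ∧
        ‖σ x - σ xt‖ ^ 2 ≤ C' * (1 + ‖x‖ + ‖xt‖) ^ (γ - 1) * ‖x - xt‖ ^ 2 ∧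
        ‖σ x‖ ^ 2 ≤ C' * (1 + ‖x‖) ^ (γ + 1) :=
  diffusion_growth_of_deriv_difference_bound_general d γ C hγ hC σ hσ hbound
end

section
/- The tamed Milstein coefficients (TMS1) satisfy the boundedness and one-step modification estimates: let d ∈ ℕ (d ≥ 1), γ ∈ [1,∞), K > 0, and let μ, g : ℝ^d → ℝ^d and σ_j : ℝ^d → ℝ^d (j = 1,…,m) satisfy ‖μ(x)‖ ≤ K(1+‖x‖)^{γ}, ‖g(x)‖ ≤ K(1+‖x‖)^{γ} and ‖σ_j(x)‖² ≤ K(1+‖x‖)^{γ+1} for all x. For h > 0 define μ_h(x) := μ(x)/(1+‖μ(x)‖²h), σ_{h,j}(x) := σ_j(x)/(1+‖μ(x)‖²h) and g_h(x) := g(x)/(1+‖g(x)‖²h). Then there exists C' > 0, depending only on K, γ and m, such that for all h > 0 and all x ∈ ℝ^d: ‖μ_h(x)‖ ≤ min{(1/2)h^{−1/2}(1+‖x‖), ‖μ(x)‖}; ‖g_h(x)‖ ≤ min{(1/2)h^{−1/2}(1+‖x‖), ‖g(x)‖}; ‖μ(x) − μ_h(x)‖ ≤ C'·h·(1+‖x‖)^{3γ};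 (Σ_{j=1}^{m}‖σ_j(x) − σ_{h,j}(x)‖²)^{1/2} ≤ C'·h·(1+‖x‖)^{(5γ+1)/2}; and ‖g(x) − g_h(x)‖ ≤ C'·h·(1+‖x‖)^{3γ}. -/
/-!
Since `1 - (1 + a²h)⁻¹ = a²h / (1 + a²h) ≤ a²h`, taming by the factor `(1 + a²h)⁻¹` moves a
vector `v` by at most `a²h‖v‖`; with `a = ‖μ x‖` or `‖g x‖` of growth `(1 + ‖x‖)^γ` this gives the
orders `3γ` and, against `‖σⱼ x‖ ~ (1 + ‖x‖)^((γ+1)/2)`, `(5γ+1)/2`. The bound by `h^(-1/2)/2` is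
AM-GM: `2a√h ≤ 1 + a²h`.
-/

section Taming

variable {E : Type*} [NormedAddCommGroup E] [NormedSpace ℝ E]

lemma inv_one_add_sq_mul_mul_le_half_rpow (a : ℝ) {h : ℝ} (hh : 0 < h) :
    (1 + a ^ 2 * h)⁻¹ * a ≤ 1 / 2 * h ^ (-(1 / 2) : ℝ) := by
  have hsqrt : √h ^ 2 = h := Real.sq_sqrt hh.le
  have amgm : 2 * (a * √h) * 1 ≤ (a * √h) ^ 2 + 1 ^ 2 := two_mul_le_add_sq _ _
  rw [Real.rpow_neg hh.le, ← Real.sqrt_eq_rpow, inv_mul_le_iff₀ (by positivity)]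
  rw [mul_pow, hsqrt] at amgm
  field_simp
  nlinarith [Real.sqrt_pos.mpr hh]

lemma norm_tame_le_min (v : E) {h r : ℝ} (hh : 0 < h) (hr : 1 ≤ r) :
    ‖(1 + ‖v‖ ^ 2 * h)⁻¹ • v‖ ≤ min (1 / 2 * h ^ (-(1 / 2) : ℝ) * r) ‖v‖ := by
  have hden : 1 ≤ 1 + ‖v‖ ^ 2 * h := le_add_of_nonneg_right (by positivity)
  rw [norm_smul_of_nonneg (by positivity)]
  refine le_min ?_ ?_
  · calc (1 + ‖v‖ ^ 2 * h)⁻¹ * ‖v‖ ≤ 1 / 2 * h ^ (-(1 / 2) : ℝ) :=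
          inv_one_add_sq_mul_mul_le_half_rpow _ hh
      _ ≤ 1 / 2 * h ^ (-(1 / 2) : ℝ) * r := le_mul_of_one_le_right (by positivity) hr
  · exact mul_le_of_le_one_left (norm_nonneg v) (inv_le_one_of_one_le₀ hden)

lemma norm_sub_inv_one_add_sq_mul_smul_le (v : E) (a : ℝ) {h : ℝ} (hh : 0 ≤ h) :
    ‖v - (1 + a ^ 2 * h)⁻¹ • v‖ ≤ a ^ 2 * h * ‖v‖ := by
  have hah : 0 ≤ a ^ 2 * h := by positivity
  have hsub : v - (1 + a ^ 2 * h)⁻¹ • v = (1 - (1 + a ^ 2 * h)⁻¹) • v := by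
    rw [sub_smul, one_smul]
  have hcoef : 1 - (1 + a ^ 2 * h)⁻¹ = a ^ 2 * h / (1 + a ^ 2 * h) := by
    field_simp
    ring
  rw [hsub, hcoef, norm_smul, Real.norm_of_nonneg (by positivity)]
  gcongr
  exact div_le_self hah (le_add_of_nonneg_right hah)

lemma norm_sub_tame_le_of_norm_le {v : E} {h K b : ℝ} (hh : 0 ≤ h) (hv : ‖v‖ ≤ K * b) :
    ‖v - (1 + ‖v‖ ^ 2 * h)⁻¹ • v‖ ≤ K ^ 3 * h * b ^ 3 :=
  calc ‖v - (1 + ‖v‖ ^ 2 * h)⁻¹ • v‖ ≤ ‖v‖ ^ 2 * h * ‖v‖ :=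
        norm_sub_inv_one_add_sq_mul_smul_le v _ hh
    _ = ‖v‖ ^ 3 * h := by ring
    _ ≤ (K * b) ^ 3 * h := by gcongr
    _ = K ^ 3 * h * b ^ 3 := by ring

lemma sq_norm_sub_tame_le_of_sq_norm_le {v w : E} {h K b c : ℝ} (hh : 0 ≤ h)
    (hv : ‖v‖ ≤ K * b) (hw : ‖w‖ ^ 2 ≤ K * c) :
    ‖w - (1 + ‖v‖ ^ 2 * h)⁻¹ • w‖ ^ 2 ≤ K ^ 5 * h ^ 2 * (b ^ 4 * c) := by
  have hK : 0 ≤ K * c := (sq_nonneg _).trans hw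
  calc ‖w - (1 + ‖v‖ ^ 2 * h)⁻¹ • w‖ ^ 2 ≤ (‖v‖ ^ 2 * h * ‖w‖) ^ 2 := by
        gcongr
        exact norm_sub_inv_one_add_sq_mul_smul_le w _ hh
    _ = (‖v‖ ^ 2) ^ 2 * h ^ 2 * ‖w‖ ^ 2 := by ring
    _ ≤ ((K * b) ^ 2) ^ 2 * h ^ 2 * (K * c) := by gcongr
    _ = K ^ 5 * h ^ 2 * (b ^ 4 * c) := by ring

end Taming

lemma rpow_half_sum_le_sqrt_card_mul {ι : Type*} [Fintype ι] (f : ι → ℝ) {B : ℝ}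
    (hf : ∀ i, f i ≤ B) : (∑ i, f i) ^ ((1 : ℝ) / 2) ≤ √(Fintype.card ι * B) := by
  rw [← Real.sqrt_eq_rpow, ← nsmul_eq_mul]
  exact Real.sqrt_le_sqrt (Finset.sum_le_card_nsmul _ _ _ fun i _ ↦ hf i)

lemma sqrt_mul_sq_mul_rpow {r : ℝ} (hr : 0 ≤ r) (a : ℝ) {h : ℝ} (hh : 0 ≤ h) (p : ℝ) :
    √(a * (h ^ 2 * r ^ p)) = √a * h * r ^ (p / 2) := by
  have hsq : h ^ 2 * r ^ p = (h * r ^ (p / 2)) ^ 2 := by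
    rw [mul_pow, ← Real.rpow_mul_natCast hr]
    norm_num
  rw [hsq, Real.sqrt_mul' _ (sq_nonneg _), Real.sqrt_sq (by positivity), mul_assoc]

theorem tamed_milstein_TMS1_estimates_general
    (d m : ℕ) (γ K : ℝ) (hK : 0 < K)
    (μ g : EuclideanSpace ℝ (Fin d) → EuclideanSpace ℝ (Fin d))
    (σ : Fin m → EuclideanSpace ℝ (Fin d) → EuclideanSpace ℝ (Fin d))
    (hμ : ∀ x, ‖μ x‖ ≤ K * (1 + ‖x‖) ^ γ)
    (hg : ∀ x, ‖g x‖ ≤ K * (1 + ‖x‖) ^ γ)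
    (hσ : ∀ j x, ‖σ j x‖ ^ 2 ≤ K * (1 + ‖x‖) ^ (γ + 1)) :
    ∃ C' : ℝ, 0 < C' ∧
      ∀ h : ℝ, 0 < h → ∀ x : EuclideanSpace ℝ (Fin d),
        ‖(1 + ‖μ x‖ ^ 2 * h)⁻¹ • μ x‖
            ≤ min ((1 / 2) * h ^ (-(1 / 2) : ℝ) * (1 + ‖x‖)) ‖μ x‖ ∧
        ‖(1 + ‖g x‖ ^ 2 * h)⁻¹ • g x‖
            ≤ min ((1 / 2) * h ^ (-(1 / 2) : ℝ) * (1 + ‖x‖)) ‖g x‖ ∧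
        ‖μ x - (1 + ‖μ x‖ ^ 2 * h)⁻¹ • μ x‖ ≤ C' * h * (1 + ‖x‖) ^ (3 * γ) ∧
        (∑ j, ‖σ j x - (1 + ‖μ x‖ ^ 2 * h)⁻¹ • σ j x‖ ^ 2) ^ ((1 : ℝ) / 2)
            ≤ C' * h * (1 + ‖x‖) ^ ((5 * γ + 1) / 2) ∧
        ‖g x - (1 + ‖g x‖ ^ 2 * h)⁻¹ • g x‖ ≤ C' * h * (1 + ‖x‖) ^ (3 * γ) := by
  refine ⟨max (K ^ 3) √(m * K ^ 5), lt_max_of_lt_left (by positivity), fun h hh x ↦ ?_⟩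
  have hr : 0 ≤ 1 + ‖x‖ := by positivity
  have drift {v : EuclideanSpace ℝ (Fin d)} (hv : ‖v‖ ≤ K * (1 + ‖x‖) ^ γ) : ‖v - (1 + ‖v‖ ^ 2 * h)⁻¹ • v‖
      ≤ max (K ^ 3) √(m * K ^ 5) * h * (1 + ‖x‖) ^ (3 * γ) := by
    calc _ ≤ K ^ 3 * h * ((1 + ‖x‖) ^ γ) ^ 3 := norm_sub_tame_le_of_norm_le hh.le hv
      _ ≤ _ := by
        rw [← Real.rpow_mul_natCast hr, Nat.cast_ofNat, mul_comm γ]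
        gcongr
        exact le_max_left _ _
  have diffusion_term (j) : ‖σ j x - (1 + ‖μ x‖ ^ 2 * h)⁻¹ • σ j x‖ ^ 2
      ≤ K ^ 5 * (h ^ 2 * (1 + ‖x‖) ^ (5 * γ + 1)) := by
    calc _ ≤ K ^ 5 * h ^ 2 * (((1 + ‖x‖) ^ γ) ^ 4 * (1 + ‖x‖) ^ (γ + 1)) :=
          sq_norm_sub_tame_le_of_sq_norm_le hh.le (hμ x) (hσ j x)
      _ = _ := by
        rw [← Real.rpow_mul_natCast hr, ← Real.rpow_add (by positivity)]
        ring_nf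
  refine ⟨norm_tame_le_min _ hh (by simp), norm_tame_le_min _ hh (by simp), drift (hμ x), ?_,
    drift (hg x)⟩
  calc _ ≤ √(Fintype.card (Fin m) * (K ^ 5 * (h ^ 2 * (1 + ‖x‖) ^ (5 * γ + 1)))) :=
        rpow_half_sum_le_sqrt_card_mul _ diffusion_term
    _ = √(m * K ^ 5) * h * (1 + ‖x‖) ^ ((5 * γ + 1) / 2) := by
        rw [Fintype.card_fin, ← mul_assoc, sqrt_mul_sq_mul_rpow hr _ hh.le]
    _ ≤ _ := by gcongr; exact le_max_right _ _

/-- Boundedness and one-step modification estimates for the tamed Milstein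
coefficients of Model 1 (TMS1). -/
theorem tamed_milstein_TMS1_estimates
    (d m : ℕ) (hd : 1 ≤ d) (hm : 1 ≤ m) (γ K : ℝ) (hγ : 1 ≤ γ) (hK : 0 < K)
    (μ g : EuclideanSpace ℝ (Fin d) → EuclideanSpace ℝ (Fin d))
    (σ : Fin m → EuclideanSpace ℝ (Fin d) → EuclideanSpace ℝ (Fin d))
    (hμ : ∀ x, ‖μ x‖ ≤ K * (1 + ‖x‖) ^ γ)
    (hg : ∀ x, ‖g x‖ ≤ K * (1 + ‖x‖) ^ γ)
    (hσ : ∀ j x, ‖σ j x‖ ^ 2 ≤ K * (1 + ‖x‖) ^ (γ + 1)) :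
    ∃ C' : ℝ, 0 < C' ∧
      ∀ h : ℝ, 0 < h → ∀ x : EuclideanSpace ℝ (Fin d),
        ‖(1 + ‖μ x‖ ^ 2 * h)⁻¹ • μ x‖
            ≤ min ((1 / 2) * h ^ (-(1 / 2) : ℝ) * (1 + ‖x‖)) ‖μ x‖ ∧
        ‖(1 + ‖g x‖ ^ 2 * h)⁻¹ • g x‖
            ≤ min ((1 / 2) * h ^ (-(1 / 2) : ℝ) * (1 + ‖x‖)) ‖g x‖ ∧
        ‖μ x - (1 + ‖μ x‖ ^ 2 * h)⁻¹ • μ x‖ ≤ C' * h * (1 + ‖x‖) ^ (3 * γ) ∧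
        (∑ j, ‖σ j x - (1 + ‖μ x‖ ^ 2 * h)⁻¹ • σ j x‖ ^ 2) ^ ((1 : ℝ) / 2)
            ≤ C' * h * (1 + ‖x‖) ^ ((5 * γ + 1) / 2) ∧
        ‖g x - (1 + ‖g x‖ ^ 2 * h)⁻¹ • g x‖ ≤ C' * h * (1 + ‖x‖) ^ (3 * γ) :=
  tamed_milstein_TMS1_estimates_general d m γ K hK μ g σ hμ hg hσ
end

section
/- The tamed Milstein coefficients of Model 2 (TMS2) satisfy the required estimates: let d, m ∈ ℕ (d, m ≥ 1), γ ∈ [1,∞), p₀ ≥ 1, K, C₀ > 0, and let μ : ℝ^d → ℝ^d and σ_j : ℝ^d → ℝ^d (j = 1,…,m) satisfy ‖μ(x)‖ ≤ K(1+‖x‖)^{γ}, ‖σ_j(x)‖² ≤ K(1+‖x‖)^{γ+1} and 2⟨x, μ(x)⟩ + (2p₀−1)Σ_j‖σ_j(x)‖² ≤ C₀(1+‖x‖²) for all x. For h > 0 define μ_h(x) := μ(x)/(1+‖x‖^{2(γ−1)}h) and σ_{h,j}(x) := σ_j(x)/(1+‖x‖^{2(γ−1)}h). Then: (a) 2⟨x,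 μ_h(x)⟩ + (2p₀−1)Σ_j‖σ_{h,j}(x)‖² ≤ C₀(1+‖x‖²) for all h > 0, x ∈ ℝ^d; and (b) there exists C' > 0 depending only on K, γ, m such that for all h ∈ (0,1] and all x ∈ ℝ^d: ‖μ_h(x)‖ ≤ min{C'·h^{−1/2}(1+‖x‖), ‖μ(x)‖}, ‖μ(x) − μ_h(x)‖ ≤ C'·h·(1+‖x‖)^{3γ−2}, and (Σ_j‖σ_j(x) − σ_{h,j}(x)‖²)^{1/2} ≤ C'·h·(1+‖x‖)^{(5γ−3)/2}. -/
set_option maxHeartbeats 1000000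


open scoped RealInnerProductSpace

/-- Estimates for the tamed Milstein coefficients of Model 2 (TMS2):
coercivity is preserved and the taming error is of first order. -/
theorem tamed_milstein_TMS2_estimates
    (d m : ℕ) (hd : 1 ≤ d) (hm : 1 ≤ m) (γ p₀ K C₀ : ℝ)
    (hγ : 1 ≤ γ) (hp₀ : 1 ≤ p₀) (hK : 0 < K) (hC₀ : 0 < C₀)
    (μ : EuclideanSpace ℝ (Fin d) → EuclideanSpace ℝ (Fin d))
    (σ : Fin m → EuclideanSpace ℝ (Fin d) → EuclideanSpace ℝ (Fin d))
    (hμ : ∀ x, ‖μ x‖ ≤ K * (1 + ‖x‖) ^ γ)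
    (hσ : ∀ j x, ‖σ j x‖ ^ 2 ≤ K * (1 + ‖x‖) ^ (γ + 1))
    (hco : ∀ x : EuclideanSpace ℝ (Fin d),
      2 * ⟪x, μ x⟫ + (2 * p₀ - 1) * ∑ j, ‖σ j x‖ ^ 2 ≤ C₀ * (1 + ‖x‖ ^ 2)) :
    (∀ h : ℝ, 0 < h → ∀ x : EuclideanSpace ℝ (Fin d),
      2 * ⟪x, (1 + ‖x‖ ^ (2 * (γ - 1)) * h)⁻¹ • μ x⟫
          + (2 * p₀ - 1) * ∑ j, ‖(1 + ‖x‖ ^ (2 * (γ - 1)) * h)⁻¹ • σ j x‖ ^ 2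
        ≤ C₀ * (1 + ‖x‖ ^ 2)) ∧
    ∃ C' : ℝ, 0 < C' ∧
      ∀ h : ℝ, 0 < h → h ≤ 1 → ∀ x : EuclideanSpace ℝ (Fin d),
        ‖(1 + ‖x‖ ^ (2 * (γ - 1)) * h)⁻¹ • μ x‖
            ≤ min (C' * h ^ (-(1 / 2) : ℝ) * (1 + ‖x‖)) ‖μ x‖ ∧
        ‖μ x - (1 + ‖x‖ ^ (2 * (γ - 1)) * h)⁻¹ • μ x‖
            ≤ C' * h * (1 + ‖x‖) ^ (3 * γ - 2) ∧
        (∑ j, ‖σ j x - (1 + ‖x‖ ^ (2 * (γ - 1)) * h)⁻¹ • σ j x‖ ^ 2) ^ ((1 : ℝ) / 2)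
            ≤ C' * h * (1 + ‖x‖) ^ ((5 * γ - 3) / 2) := by
  constructor
  · -- coercivity is preserved
    intro h hh x
    have hr0 : (0:ℝ) ≤ ‖x‖ := norm_nonneg x
    have hc0 : (0:ℝ) ≤ ‖x‖ ^ (2*(γ-1)) := Real.rpow_nonneg hr0 _
    set T : ℝ := 1 + ‖x‖ ^ (2*(γ-1)) * h with hTdef
    have hT1 : 1 ≤ T := le_add_of_nonneg_right (mul_nonneg hc0 hh.le)
    have hT0 : (0:ℝ) < T := lt_of_lt_of_le one_pos hT1
    have hTi0 : 0 < T⁻¹ := inv_pos.mpr hT0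
    have hTi1 : T⁻¹ ≤ 1 := by
      rw [inv_le_one_iff₀]; right; exact hT1
    have h1 : ⟪x, T⁻¹ • μ x⟫ = T⁻¹ * ⟪x, μ x⟫ := real_inner_smul_right x (μ x) T⁻¹
    have h2 : ∀ j : Fin m, ‖T⁻¹ • σ j x‖^2 = T⁻¹^2 * ‖σ j x‖^2 := by
      intro j
      rw [norm_smul, Real.norm_eq_abs, abs_of_pos hTi0]; ring
    rw [h1]
    simp only [h2]
    rw [← Finset.mul_sum]
    have hS : 0 ≤ ∑ j, ‖σ j x‖^2 := Finset.sum_nonneg fun j _ => sq_nonneg _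
    have hB : 0 ≤ (2*p₀-1) * ∑ j, ‖σ j x‖^2 := mul_nonneg (by linarith) hS
    have hR : 0 ≤ C₀ * (1 + ‖x‖^2) := by positivity
    have e1 : T⁻¹ * (2 * ⟪x, μ x⟫ + (2*p₀-1) * ∑ j, ‖σ j x‖^2)
        ≤ T⁻¹ * (C₀ * (1 + ‖x‖^2)) := mul_le_mul_of_nonneg_left (hco x) hTi0.le
    have e2 : T⁻¹ * (C₀ * (1 + ‖x‖^2)) ≤ C₀ * (1 + ‖x‖^2) :=
      mul_le_of_le_one_left hR hTi1
    have e3 : 0 ≤ (T⁻¹ - T⁻¹^2) * ((2*p₀-1) * ∑ j, ‖σ j x‖^2) :=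
      mul_nonneg (by nlinarith) hB
    nlinarith [e1, e2, e3]
  · -- taming error estimates
    refine ⟨K * 2 ^ γ + K + Real.sqrt (m*K) + 1, by positivity, ?_⟩
    intro h hh hh1 x
    have hr0 : (0:ℝ) ≤ ‖x‖ := norm_nonneg x
    have hs0 : (0:ℝ) < 1 + ‖x‖ := by linarith
    have hc0 : (0:ℝ) ≤ ‖x‖ ^ (2*(γ-1)) := Real.rpow_nonneg hr0 _
    set c : ℝ := ‖x‖ ^ (2*(γ-1)) with hcdef
    set T : ℝ := 1 + c * h with hTdef
    have hT1 : 1 ≤ T := le_add_of_nonneg_right (mul_nonneg hc0 hh.le)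
    have hT0 : (0:ℝ) < T := lt_of_lt_of_le one_pos hT1
    have hTi0 : 0 < T⁻¹ := inv_pos.mpr hT0
    have hTi1 : T⁻¹ ≤ 1 := by
      rw [inv_le_one_iff₀]; right; exact hT1
    have hnormsmul : ∀ v : EuclideanSpace ℝ (Fin d), ‖T⁻¹ • v‖ = T⁻¹ * ‖v‖ := fun v => by
      rw [norm_smul, Real.norm_eq_abs, abs_of_pos hTi0]
    have hsh0 : 0 < Real.sqrt h := Real.sqrt_pos.mpr hh
    have hsh1 : Real.sqrt h ≤ 1 := by
      rw [show (1:ℝ) = Real.sqrt 1 from (Real.sqrt_one).symm]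
      exact Real.sqrt_le_sqrt hh1
    have h2g0 : (0:ℝ) ≤ 2 ^ (γ-1) := Real.rpow_nonneg (by norm_num) _
    -- 1 - T⁻¹ ≤ c * h
    have h1Tnn : (0:ℝ) ≤ 1 - T⁻¹ := by linarith
    have h1T : 1 - T⁻¹ ≤ c * h := by
      have hne : T ≠ 0 := ne_of_gt hT0
      have he : 1 - T⁻¹ = (c*h) * T⁻¹ := by
        field_simp
        rw [hTdef]; ring
      rw [he]
      exact mul_le_of_le_one_right (mul_nonneg hc0 hh.le) hTi1
    have hcs : c ≤ (1+‖x‖) ^ (2*(γ-1)) :=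
      Real.rpow_le_rpow hr0 (by linarith) (by linarith)
    have hC'K : K ≤ K * 2 ^ γ + K + Real.sqrt (↑m*K) + 1 := by
      have h1 : 0 ≤ K * 2 ^ γ := mul_nonneg hK.le (Real.rpow_nonneg (by norm_num) _)
      have h2 : 0 ≤ Real.sqrt (↑m*K) := Real.sqrt_nonneg _
      linarith
    refine ⟨?_, ?_, ?_⟩
    · -- bound on ‖μ_h‖
      refine le_min ?_ ?_
      · -- C' h^{-1/2} (1+‖x‖) bound
        have hsq : (‖x‖ ^ (γ-1)) ^ 2 = c := by
          rw [hcdef, ← Real.rpow_natCast (‖x‖ ^ (γ-1)) 2, ← Real.rpow_mul hr0]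
          norm_num [mul_comm]
        have ht : Real.sqrt h * ‖x‖ ^ (γ-1) ≤ T := by
          rw [hTdef]
          nlinarith [sq_nonneg (Real.sqrt h * ‖x‖ ^ (γ-1) - 1), Real.sq_sqrt hh.le,
            mul_nonneg hc0 hh.le, Real.sqrt_nonneg h, Real.rpow_nonneg hr0 (γ-1)]
        have hmax : (1+‖x‖) ^ (γ-1) ≤ 2 ^ (γ-1) * (1 + ‖x‖ ^ (γ-1)) := by
          rcases le_total ‖x‖ 1 with hx1 | hx1
          · have h1 : (1+‖x‖) ^ (γ-1) ≤ (2:ℝ) ^ (γ-1) :=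
              Real.rpow_le_rpow hs0.le (by linarith) (by linarith)
            have h2 : (0:ℝ) ≤ ‖x‖ ^ (γ-1) := Real.rpow_nonneg hr0 _
            nlinarith
          · have h1 : (1+‖x‖) ^ (γ-1) ≤ (2*‖x‖) ^ (γ-1) :=
              Real.rpow_le_rpow hs0.le (by linarith) (by linarith)
            rw [Real.mul_rpow (by norm_num) hr0] at h1
            nlinarith
        have h2γ : (2:ℝ)^γ = 2^(γ-1) * 2 := by
          rw [← Real.rpow_add_one (by norm_num : (2:ℝ) ≠ 0) (γ-1)]
          ring_nf
        have key : Real.sqrt h * (1+‖x‖)^(γ-1) ≤ 2^γ * T := by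
          have k1 : Real.sqrt h * (1+‖x‖)^(γ-1)
              ≤ Real.sqrt h * (2^(γ-1) * (1 + ‖x‖^(γ-1))) :=
            mul_le_mul_of_nonneg_left hmax hsh0.le
          nlinarith [mul_le_mul_of_nonneg_left ht h2g0, h2g0, hT1]
        have e3 : T⁻¹ * (1+‖x‖)^(γ-1) ≤ 2^γ * (Real.sqrt h)⁻¹ := by
          rw [inv_mul_eq_div, ← div_eq_mul_inv, div_le_div_iff₀ hT0 hsh0]
          nlinarith [key]
        have hsγ : (1+‖x‖)^γ = (1+‖x‖)^(γ-1) * (1+‖x‖) := by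
          rw [show γ = (γ-1) + 1 by ring, Real.rpow_add_one (ne_of_gt hs0)]
          ring_nf
        have hhalf : h ^ (-(1/2) : ℝ) = (Real.sqrt h)⁻¹ := by
          rw [Real.rpow_neg hh.le, Real.sqrt_eq_rpow]
        rw [hnormsmul, hhalf]
        calc T⁻¹ * ‖μ x‖ ≤ T⁻¹ * (K * (1+‖x‖)^γ) :=
              mul_le_mul_of_nonneg_left (hμ x) hTi0.le
          _ = K * (T⁻¹ * (1+‖x‖)^(γ-1)) * (1+‖x‖) := by rw [hsγ]; ring
          _ ≤ K * (2^γ * (Real.sqrt h)⁻¹) * (1+‖x‖) :=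
              mul_le_mul_of_nonneg_right (mul_le_mul_of_nonneg_left e3 hK.le) hs0.le
          _ ≤ (K * 2 ^ γ + K + Real.sqrt (↑m*K) + 1) * (Real.sqrt h)⁻¹ * (1+‖x‖) := by
              have hnn : 0 ≤ (K + Real.sqrt (↑m*K) + 1) * ((Real.sqrt h)⁻¹ * (1+‖x‖)) := by
                have := Real.sqrt_nonneg ((m:ℝ)*K)
                positivity
              nlinarith [hnn]
      · rw [hnormsmul]
        exact mul_le_of_le_one_left (norm_nonneg _) hTi1
    · -- drift taming error
      have hdiff : μ x - T⁻¹ • μ x = (1 - T⁻¹) • μ x := by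
        rw [sub_smul, one_smul]
      rw [hdiff, norm_smul, Real.norm_eq_abs, abs_of_nonneg h1Tnn]
      have hexp : (1+‖x‖)^(2*(γ-1)) * (1+‖x‖)^γ = (1+‖x‖)^(3*γ-2) := by
        rw [← Real.rpow_add hs0, show 2*(γ-1)+γ = 3*γ-2 by ring]
      calc (1 - T⁻¹) * ‖μ x‖ ≤ (c*h) * ‖μ x‖ :=
            mul_le_mul_of_nonneg_right h1T (norm_nonneg _)
        _ ≤ (c*h) * (K * (1+‖x‖)^γ) :=
            mul_le_mul_of_nonneg_left (hμ x) (mul_nonneg hc0 hh.le)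
        _ ≤ ((1+‖x‖)^(2*(γ-1))*h) * (K * (1+‖x‖)^γ) := by
            have : (0:ℝ) ≤ K * (1+‖x‖)^γ := by positivity
            exact mul_le_mul_of_nonneg_right (mul_le_mul_of_nonneg_right hcs hh.le) this
        _ = K * h * ((1+‖x‖)^(2*(γ-1)) * (1+‖x‖)^γ) := by ring
        _ = K * h * (1+‖x‖)^(3*γ-2) := by rw [hexp]
        _ ≤ (K * 2 ^ γ + K + Real.sqrt (↑m*K) + 1) * h * (1+‖x‖)^(3*γ-2) := by
            have hnn : (0:ℝ) ≤ h * (1+‖x‖)^(3*γ-2) := by positivity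
            nlinarith [mul_le_mul_of_nonneg_right hC'K hnn]
    · -- diffusion taming error
      set C' : ℝ := K * 2 ^ γ + K + Real.sqrt (↑m*K) + 1 with hC'def
      have hC'0 : 0 < C' := by positivity
      set R : ℝ := C' * h * (1+‖x‖)^((5*γ-3)/2) with hRdef
      have hR0 : 0 ≤ R := by positivity
      have hterm : ∀ j : Fin m, ‖σ j x - T⁻¹ • σ j x‖^2
          ≤ (c*h)^2 * (K * (1+‖x‖)^(γ+1)) := by
        intro j
        have hdiff : σ j x - T⁻¹ • σ j x = (1 - T⁻¹) • σ j x := by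
          rw [sub_smul, one_smul]
        rw [hdiff, norm_smul, Real.norm_eq_abs, abs_of_nonneg h1Tnn, mul_pow]
        have t1 : (1-T⁻¹)^2 ≤ (c*h)^2 := by nlinarith
        have t2 : (0:ℝ) ≤ ‖σ j x‖^2 := sq_nonneg _
        exact mul_le_mul t1 (hσ j x) t2 (sq_nonneg _)
      have hsum : ∑ j, ‖σ j x - T⁻¹ • σ j x‖^2
          ≤ (m:ℝ) * ((c*h)^2 * (K * (1+‖x‖)^(γ+1))) := by
        calc ∑ j, ‖σ j x - T⁻¹ • σ j x‖^2
            ≤ ∑ _j : Fin m, (c*h)^2 * (K * (1+‖x‖)^(γ+1)) :=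
              Finset.sum_le_sum fun j _ => hterm j
          _ = (m:ℝ) * ((c*h)^2 * (K * (1+‖x‖)^(γ+1))) := by
              rw [Finset.sum_const, Finset.card_univ, Fintype.card_fin, nsmul_eq_mul]
      have hsq2 : ((1+‖x‖)^((5*γ-3)/2))^2 = (1+‖x‖)^(5*γ-3) := by
        rw [← Real.rpow_natCast ((1+‖x‖)^((5*γ-3)/2)) 2, ← Real.rpow_mul hs0.le]
        norm_num
      have hexp2 : ((1+‖x‖)^(2*(γ-1)))^2 * (1+‖x‖)^(γ+1) = (1+‖x‖)^(5*γ-3) := by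
        rw [← Real.rpow_natCast ((1+‖x‖)^(2*(γ-1))) 2, ← Real.rpow_mul hs0.le,
          ← Real.rpow_add hs0]
        norm_num
        rw [show 2*(γ-1)*2 + (γ+1) = 5*γ-3 by ring]
      have hmK : (m:ℝ)*K ≤ C'^2 := by
        have h1 : Real.sqrt ((m:ℝ)*K) ≤ C' := by
          have h2 : 0 ≤ K * 2 ^ γ := mul_nonneg hK.le (Real.rpow_nonneg (by norm_num) _)
          rw [hC'def]; linarith
        nlinarith [Real.sq_sqrt (mul_nonneg (Nat.cast_nonneg m) hK.le),
          Real.sqrt_nonneg ((m:ℝ)*K)]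
      have hch2 : (c*h)^2 ≤ ((1+‖x‖)^(2*(γ-1))*h)^2 := by
        have : c*h ≤ (1+‖x‖)^(2*(γ-1))*h := mul_le_mul_of_nonneg_right hcs hh.le
        exact pow_le_pow_left₀ (mul_nonneg hc0 hh.le) this 2
      have hSR : ∑ j, ‖σ j x - T⁻¹ • σ j x‖^2 ≤ R^2 := by
        have hR2 : R^2 = C'^2 * h^2 * (1+‖x‖)^(5*γ-3) := by
          rw [hRdef, mul_pow, mul_pow, hsq2]
        rw [hR2, ← hexp2]
        have step : (m:ℝ) * ((c*h)^2 * (K * (1+‖x‖)^(γ+1)))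
            ≤ (m:ℝ) * (((1+‖x‖)^(2*(γ-1))*h)^2 * (K * (1+‖x‖)^(γ+1))) := by
          have hKp : (0:ℝ) ≤ K * (1+‖x‖)^(γ+1) := by positivity
          exact mul_le_mul_of_nonneg_left
            (mul_le_mul_of_nonneg_right hch2 hKp) (Nat.cast_nonneg m)
        have heq : (m:ℝ) * (((1+‖x‖)^(2*(γ-1))*h)^2 * (K * (1+‖x‖)^(γ+1)))
            = ((m:ℝ)*K) * (h^2 * (((1+‖x‖)^(2*(γ-1)))^2 * (1+‖x‖)^(γ+1))) := by ring
        have hfin : ((m:ℝ)*K) * (h^2 * (((1+‖x‖)^(2*(γ-1)))^2 * (1+‖x‖)^(γ+1)))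
            ≤ C'^2 * h^2 * (((1+‖x‖)^(2*(γ-1)))^2 * (1+‖x‖)^(γ+1)) := by
          have hnn : (0:ℝ) ≤ h^2 * (((1+‖x‖)^(2*(γ-1)))^2 * (1+‖x‖)^(γ+1)) := by positivity
          nlinarith [mul_le_mul_of_nonneg_right hmK hnn]
        calc ∑ j, ‖σ j x - T⁻¹ • σ j x‖^2
            ≤ (m:ℝ) * ((c*h)^2 * (K * (1+‖x‖)^(γ+1))) := hsum
          _ ≤ (m:ℝ) * (((1+‖x‖)^(2*(γ-1))*h)^2 * (K * (1+‖x‖)^(γ+1))) := step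
          _ = ((m:ℝ)*K) * (h^2 * (((1+‖x‖)^(2*(γ-1)))^2 * (1+‖x‖)^(γ+1))) := heq
          _ ≤ C'^2 * h^2 * (((1+‖x‖)^(2*(γ-1)))^2 * (1+‖x‖)^(γ+1)) := hfin
      have hmono : (∑ j, ‖σ j x - T⁻¹ • σ j x‖^2) ^ ((1:ℝ)/2) ≤ (R^2) ^ ((1:ℝ)/2) :=
        Real.rpow_le_rpow (Finset.sum_nonneg fun j _ => sq_nonneg _) hSR (by norm_num)
      have hRR : (R^2 : ℝ) ^ ((1:ℝ)/2) = R := by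
        rw [← Real.sqrt_eq_rpow]
        exact Real.sqrt_sq hR0
      rw [hRR] at hmono
      exact hmono
end

section
/- Projection error moment estimate for the projected Milstein scheme: let d ∈ ℕ (d ≥ 1), γ ∈ [1,∞) and p ∈ [1,∞). For h ∈ (0,1] define 𝒫_h : ℝ^d → ℝ^d by 𝒫_h(x) := min{1, h^{−1/(2γ)}/‖x‖}·x (with 𝒫_h(0) := 0). Then for every probability space (Ω, ℱ, ℙ), every h ∈ (0,1] and every measurable ζ : Ω → ℝ^d, E[‖ζ − 𝒫_h(ζ)‖^{2p}] ≤ h^{4p}·E[‖ζ‖^{2(4γ+1)p}] (both sides interpreted in [0,∞]). -/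
open MeasureTheory
open scoped ENNReal

/-! The radial retraction onto the ball of radius `R = h^(-1/(2γ))` moves `x` by exactly
`(‖x‖ - R)⁺`. This vanishes unless `‖x‖ > R`, and then `(‖x‖ - R)^(2p) ≤ ‖x‖^(2p) (‖x‖/R)^(8γp)`
with `R^(-8γp) = h^(4p)`. The estimate thus holds pointwise, before taking expectations. -/

section RadialRetraction

variable {E : Type*} [NormedAddCommGroup E] [NormedSpace ℝ E]

noncomputable def radialRetraction (R : ℝ) (x : E) : E :=
  min 1 (R / ‖x‖) • x

theorem norm_sub_radialRetraction {R : ℝ} (hR : 0 ≤ R) (x : E) :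
    ‖x - radialRetraction R x‖ = max (‖x‖ - R) 0 := by
  rcases eq_or_ne x 0 with rfl | hx
  · simp [radialRetraction, hR]
  have hxpos : 0 < ‖x‖ := norm_pos_iff.mpr hx
  rcases le_or_gt ‖x‖ R with hle | hlt
  · have : (1 : ℝ) ≤ R / ‖x‖ := (one_le_div hxpos).mpr hle
    simp [radialRetraction, min_eq_left this, sub_nonpos.mpr hle]
  · have hdiv : R / ‖x‖ ≤ 1 := (div_le_one hxpos).mpr hlt.le
    rw [radialRetraction, min_eq_right hdiv, show x - (R / ‖x‖) • x = (1 - R / ‖x‖) • x by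
      rw [sub_smul, one_smul], norm_smul,
      Real.norm_of_nonneg (sub_nonneg.mpr hdiv), max_eq_left (sub_nonneg.mpr hlt.le)]
    field_simp

theorem max_sub_zero_rpow_le {t R q a : ℝ} (ht : 0 ≤ t) (hR : 0 < R) (hq : 0 < q) (ha : 0 ≤ a) :
    max (t - R) 0 ^ q ≤ R ^ (-a) * t ^ (q + a) := by
  rcases le_or_gt t R with hle | hlt
  · rw [max_eq_right (sub_nonpos.mpr hle), Real.zero_rpow hq.ne']
    positivity
  have ht0 : 0 < t := hR.trans hlt
  calc max (t - R) 0 ^ q = (t - R) ^ q := by rw [max_eq_left (sub_nonneg.mpr hlt.le)]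
    _ ≤ t ^ q := Real.rpow_le_rpow (sub_nonneg.mpr hlt.le) (by linarith) hq.le
    _ ≤ t ^ q * (t / R) ^ a :=
        le_mul_of_one_le_right (by positivity) (Real.one_le_rpow ((one_le_div hR).mpr hlt.le) ha)
    _ = R ^ (-a) * t ^ (q + a) := by
        rw [Real.div_rpow ht hR.le, Real.rpow_add ht0, Real.rpow_neg hR.le]
        ring

theorem enorm_sub_radialRetraction_rpow_le {R q a : ℝ} (hR : 0 < R) (hq : 0 < q) (ha : 0 ≤ a)
    (x : E) :
    ‖x - radialRetraction R x‖ₑ ^ q ≤ ENNReal.ofReal (R ^ (-a)) * ‖x‖ₑ ^ (q + a) := by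
  rw [← ofReal_norm, ← ofReal_norm, norm_sub_radialRetraction hR.le,
    ENNReal.ofReal_rpow_of_nonneg (le_max_right _ _) hq.le,
    ENNReal.ofReal_rpow_of_nonneg (norm_nonneg _) (by positivity), ← ENNReal.ofReal_mul (by positivity)]
  exact ENNReal.ofReal_le_ofReal (max_sub_zero_rpow_le (norm_nonneg x) hR hq ha)

theorem lintegral_enorm_sub_radialRetraction_rpow_le {Ω : Type*} [MeasurableSpace Ω]
    (μ : Measure Ω) (ζ : Ω → E) {R q a : ℝ} (hR : 0 < R) (hq : 0 < q) (ha : 0 ≤ a) :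
    ∫⁻ ω, ‖ζ ω - radialRetraction R (ζ ω)‖ₑ ^ q ∂μ
      ≤ ENNReal.ofReal (R ^ (-a)) * ∫⁻ ω, ‖ζ ω‖ₑ ^ (q + a) ∂μ := by
  rw [← lintegral_const_mul' _ _ ENNReal.ofReal_ne_top]
  exact lintegral_mono fun ω => enorm_sub_radialRetraction_rpow_le hR hq ha (ζ ω)

end RadialRetraction

theorem projection_error_moment_estimate_general
    (d : ℕ) (γ p : ℝ) (hγ : 1 ≤ γ) (hp : 1 ≤ p) :
    ∀ (Ω : Type) [MeasurableSpace Ω] (ℙ : Measure Ω) [IsProbabilityMeasure ℙ],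
    ∀ h : ℝ, 0 < h → h ≤ 1 →
    ∀ ζ : Ω → EuclideanSpace ℝ (Fin d), Measurable ζ →
      (∫⁻ ω, (‖ζ ω - (min 1 (h ^ (-(1 / (2 * γ))) / ‖ζ ω‖)) • ζ ω‖₊ : ℝ≥0∞) ^ (2 * p) ∂ℙ)
        ≤ ENNReal.ofReal (h ^ (4 * p))
          * ∫⁻ ω, (‖ζ ω‖₊ : ℝ≥0∞) ^ (2 * (4 * γ + 1) * p) ∂ℙ := by
  intro Ω _ ℙ _ h hh _ ζ _
  have hγ0 : 0 < γ := one_pos.trans_le hγ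
  have hp0 : 0 < p := one_pos.trans_le hp
  have hradius : (h ^ (-(1 / (2 * γ)))) ^ (-(8 * γ * p)) = h ^ (4 * p) := by
    rw [← Real.rpow_mul hh.le]
    congr 1
    field_simp
    ring
  have hexp : 2 * p + 8 * γ * p = 2 * (4 * γ + 1) * p := by ring
  simp only [← enorm_eq_nnnorm]
  rw [← hradius, ← hexp]
  exact lintegral_enorm_sub_radialRetraction_rpow_le ℙ ζ (Real.rpow_pos_of_pos hh _)
    (by positivity) (by positivity)

/-- Projection error moment estimate for the projected Milstein scheme. -/
theorem projection_error_moment_estimate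
    (d : ℕ) (hd : 1 ≤ d) (γ p : ℝ) (hγ : 1 ≤ γ) (hp : 1 ≤ p) :
    ∀ (Ω : Type) [MeasurableSpace Ω] (ℙ : Measure Ω) [IsProbabilityMeasure ℙ],
    ∀ h : ℝ, 0 < h → h ≤ 1 →
    ∀ ζ : Ω → EuclideanSpace ℝ (Fin d), Measurable ζ →
      (∫⁻ ω, (‖ζ ω - (min 1 (h ^ (-(1 / (2 * γ))) / ‖ζ ω‖)) • ζ ω‖₊ : ℝ≥0∞) ^ (2 * p) ∂ℙ)
        ≤ ENNReal.ofReal (h ^ (4 * p))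
          * ∫⁻ ω, (‖ζ ω‖₊ : ℝ≥0∞) ^ (2 * (4 * γ + 1) * p) ∂ℙ :=
  projection_error_moment_estimate_general d γ p hγ hp
end

section
/- Midpoint-projection error moment estimate for the projected Milstein scheme: let d ∈ ℕ (d ≥ 1), γ ∈ [1,∞) and p ∈ [1,∞). For h ∈ (0,1] define 𝒫_h : ℝ^d → ℝ^d by 𝒫_h(x) := min{1, h^{−1/(2γ)}/‖x‖}·x (with 𝒫_h(0) := 0). Then there exists a constant C > 0 depending only on p (one may take C = 4^{p}) such that for every probability space (Ω, ℱ, ℙ), every h ∈ (0,1] and all measurable ζ, υ : Ω → ℝ^d, E[‖(𝒫_h(ζ)+𝒫_h(υ))/2 − 𝒫_h((ζ+υ)/2)‖^{2p}] ≤ C·h^{4p}·(E[‖ζ‖^{2(4γ+1)p}] + E[‖υ‖^{2(4γ+1)p}]) (all expectations interpreted in [0,∞]). -/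
/-!
Write `P` for the radial projection onto the closed ball of radius `R = h^(-1/(2γ))`. The midpoint
error `(P x + P y)/2 - P ((x + y)/2)` vanishes when `x` and `y` both lie in the ball, and otherwise
has norm at most `‖x‖ + ‖y‖ ≤ 2M` with `M = max ‖x‖ ‖y‖ > R`. On that event the extra factor
`(M / R)^(8γp) ≥ 1` trades `M^(2p)` for `h^(4p) M^(2(4γ+1)p)`, which gives a pointwise bound;
integrating it proves the estimate with `C = 4^p`.
-/

open MeasureTheory
open scoped ENNReal

lemma Real.rpow_le_rpow_neg_mul_rpow_add {R M : ℝ} (hR : 0 < R) (hRM : R ≤ M) (q : ℝ)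
    {s : ℝ} (hs : 0 ≤ s) : M ^ q ≤ R ^ (-s) * M ^ (q + s) := by
  have hM : 0 < M := hR.trans_le hRM
  rw [Real.rpow_add hM, Real.rpow_neg hR.le,
    show (R ^ s)⁻¹ * (M ^ q * M ^ s) = M ^ q * (M ^ s / R ^ s) by ring]
  exact le_mul_of_one_le_right (by positivity)
    ((one_le_div (by positivity)).mpr (Real.rpow_le_rpow hR.le hRM hs))

section RadialProjection

variable {E : Type*} [NormedAddCommGroup E] [NormedSpace ℝ E]

noncomputable def radialProjection (R : ℝ) (x : E) : E :=
  min 1 (R / ‖x‖) • x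

noncomputable def midpointProjectionError (R : ℝ) (x y : E) : E :=
  (1 / 2 : ℝ) • (radialProjection R x + radialProjection R y)
    - radialProjection R ((1 / 2 : ℝ) • (x + y))

lemma radialProjection_of_norm_le {R : ℝ} {x : E} (hx : ‖x‖ ≤ R) :
    radialProjection R x = x := by
  rcases eq_or_ne x 0 with rfl | hx0
  · simp [radialProjection]
  · rw [radialProjection, min_eq_left ((one_le_div (norm_pos_iff.mpr hx0)).mpr hx), one_smul]

lemma norm_radialProjection_le {R : ℝ} (hR : 0 ≤ R) (x : E) :
    ‖radialProjection R x‖ ≤ ‖x‖ := by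
  rw [radialProjection, norm_smul, Real.norm_of_nonneg (by positivity)]
  exact mul_le_of_le_one_left (norm_nonneg x) (min_le_left _ _)

lemma norm_half_smul_add_le (x y : E) : ‖(1 / 2 : ℝ) • (x + y)‖ ≤ (‖x‖ + ‖y‖) / 2 := by
  rw [norm_smul, Real.norm_of_nonneg (by norm_num)]
  linarith [norm_add_le x y]

lemma midpointProjectionError_of_norm_le {R : ℝ} {x y : E} (hx : ‖x‖ ≤ R) (hy : ‖y‖ ≤ R) :
    midpointProjectionError R x y = 0 := by
  have hmid : ‖(1 / 2 : ℝ) • (x + y)‖ ≤ R := by linarith [norm_half_smul_add_le x y]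
  rw [midpointProjectionError, radialProjection_of_norm_le hx, radialProjection_of_norm_le hy,
    radialProjection_of_norm_le hmid, sub_self]

lemma norm_midpointProjectionError_le {R : ℝ} (hR : 0 ≤ R) (x y : E) :
    ‖midpointProjectionError R x y‖ ≤ ‖x‖ + ‖y‖ := by
  unfold midpointProjectionError
  have hsum := norm_half_smul_add_le (radialProjection R x) (radialProjection R y)
  have hmid := (norm_radialProjection_le hR ((1 / 2 : ℝ) • (x + y))).trans
    (norm_half_smul_add_le x y)
  linarith [norm_sub_le ((1 / 2 : ℝ) • (radialProjection R x + radialProjection R y))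
    (radialProjection R ((1 / 2 : ℝ) • (x + y))),
    norm_radialProjection_le hR x, norm_radialProjection_le hR y]

lemma norm_midpointProjectionError_rpow_le {R q s : ℝ} (hR : 0 < R) (hq : 0 < q) (hs : 0 ≤ s)
    (x y : E) :
    ‖midpointProjectionError R x y‖ ^ q ≤ 2 ^ q * R ^ (-s) * (‖x‖ ^ (q + s) + ‖y‖ ^ (q + s)) := by
  by_cases hxy : ‖x‖ ≤ R ∧ ‖y‖ ≤ R
  · rw [midpointProjectionError_of_norm_le hxy.1 hxy.2, norm_zero, Real.zero_rpow hq.ne']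
    positivity
  set M := max ‖x‖ ‖y‖ with hM
  have hRM : R < M := by
    rw [not_and_or, not_le, not_le] at hxy
    exact lt_max_iff.mpr hxy
  have hMpow : M ^ (q + s) ≤ ‖x‖ ^ (q + s) + ‖y‖ ^ (q + s) := by
    rcases max_choice ‖x‖ ‖y‖ with hmax | hmax <;> rw [hM, hmax] <;> simp [Real.rpow_nonneg]
  calc ‖midpointProjectionError R x y‖ ^ q ≤ (2 * M) ^ q := by
        refine Real.rpow_le_rpow (norm_nonneg _) ?_ hq.le
        linarith [norm_midpointProjectionError_le hR.le x y, le_max_left ‖x‖ ‖y‖,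
          le_max_right ‖x‖ ‖y‖]
    _ = 2 ^ q * M ^ q := Real.mul_rpow zero_le_two (hR.trans hRM).le
    _ ≤ 2 ^ q * (R ^ (-s) * M ^ (q + s)) := by
        gcongr
        exact Real.rpow_le_rpow_neg_mul_rpow_add hR hRM.le q hs
    _ ≤ 2 ^ q * R ^ (-s) * (‖x‖ ^ (q + s) + ‖y‖ ^ (q + s)) := by
        rw [← mul_assoc]
        gcongr

lemma enorm_midpointProjectionError_rpow_le {R q s : ℝ} (hR : 0 < R) (hq : 0 < q) (hs : 0 ≤ s)
    (x y : E) :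
    ‖midpointProjectionError R x y‖ₑ ^ q
      ≤ ENNReal.ofReal (2 ^ q * R ^ (-s)) * (‖x‖ₑ ^ (q + s) + ‖y‖ₑ ^ (q + s)) := by
  have hqs : 0 ≤ q + s := by linarith
  simp only [← ofReal_norm]
  rw [ENNReal.ofReal_rpow_of_nonneg (norm_nonneg _) hq.le,
    ENNReal.ofReal_rpow_of_nonneg (norm_nonneg _) hqs,
    ENNReal.ofReal_rpow_of_nonneg (norm_nonneg _) hqs,
    ← ENNReal.ofReal_add (by positivity) (by positivity), ← ENNReal.ofReal_mul (by positivity)]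
  exact ENNReal.ofReal_le_ofReal (norm_midpointProjectionError_rpow_le hR hq hs x y)

end RadialProjection

theorem midpoint_projection_error_moment_estimate_general
    (d : ℕ) (γ p : ℝ) (hγ : 1 ≤ γ) (hp : 1 ≤ p) :
    ∃ C : ℝ, 0 < C ∧
      ∀ (Ω : Type) [MeasurableSpace Ω] (ℙ : Measure Ω) [IsProbabilityMeasure ℙ],
      ∀ h : ℝ, 0 < h → h ≤ 1 →
      ∀ ζ υ : Ω → EuclideanSpace ℝ (Fin d), Measurable ζ → Measurable υ →
        (∫⁻ ω, (‖(1 / 2 : ℝ) • ((min 1 (h ^ (-(1 / (2 * γ))) / ‖ζ ω‖)) • ζ ω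
              + (min 1 (h ^ (-(1 / (2 * γ))) / ‖υ ω‖)) • υ ω)
            - (min 1 (h ^ (-(1 / (2 * γ))) / ‖(1 / 2 : ℝ) • (ζ ω + υ ω)‖))
                • ((1 / 2 : ℝ) • (ζ ω + υ ω))‖₊ : ℝ≥0∞) ^ (2 * p) ∂ℙ)
          ≤ ENNReal.ofReal (C * h ^ (4 * p))
            * ((∫⁻ ω, (‖ζ ω‖₊ : ℝ≥0∞) ^ (2 * (4 * γ + 1) * p) ∂ℙ)
              + ∫⁻ ω, (‖υ ω‖₊ : ℝ≥0∞) ^ (2 * (4 * γ + 1) * p) ∂ℙ) := by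
  refine ⟨4 ^ p, by positivity, fun Ω _ ℙ _ h h0 _ ζ υ hζ _ => ?_⟩
  have hγ0 : γ ≠ 0 := by positivity
  have hR : 0 < h ^ (-(1 / (2 * γ))) := Real.rpow_pos_of_pos h0 _
  have hconst :
      (2 : ℝ) ^ (2 * p) * (h ^ (-(1 / (2 * γ)))) ^ (-(8 * γ * p)) = 4 ^ p * h ^ (4 * p) := by
    rw [Real.rpow_mul zero_le_two, ← Real.rpow_mul h0.le]
    congr 2
    · norm_num
    · field_simp; norm_num
  have hexp : 2 * p + 8 * γ * p = 2 * (4 * γ + 1) * p := by ring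
  have pointwise := fun ω => enorm_midpointProjectionError_rpow_le (q := 2 * p) (s := 8 * γ * p)
    hR (by positivity) (by positivity) (ζ ω) (υ ω)
  simp only [hconst, hexp] at pointwise
  refine (lintegral_mono pointwise).trans_eq ?_
  rw [lintegral_const_mul' _ _ ENNReal.ofReal_ne_top, lintegral_add_left (by fun_prop)]
  rfl

/-- Midpoint-projection error moment estimate for the projected Milstein scheme. -/
theorem midpoint_projection_error_moment_estimate
    (d : ℕ) (hd : 1 ≤ d) (γ p : ℝ) (hγ : 1 ≤ γ) (hp : 1 ≤ p) :
    ∃ C : ℝ, 0 < C ∧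
      ∀ (Ω : Type) [MeasurableSpace Ω] (ℙ : Measure Ω) [IsProbabilityMeasure ℙ],
      ∀ h : ℝ, 0 < h → h ≤ 1 →
      ∀ ζ υ : Ω → EuclideanSpace ℝ (Fin d), Measurable ζ → Measurable υ →
        (∫⁻ ω, (‖(1 / 2 : ℝ) • ((min 1 (h ^ (-(1 / (2 * γ))) / ‖ζ ω‖)) • ζ ω
              + (min 1 (h ^ (-(1 / (2 * γ))) / ‖υ ω‖)) • υ ω)
            - (min 1 (h ^ (-(1 / (2 * γ))) / ‖(1 / 2 : ℝ) • (ζ ω + υ ω)‖))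
                • ((1 / 2 : ℝ) • (ζ ω + υ ω))‖₊ : ℝ≥0∞) ^ (2 * p) ∂ℙ)
          ≤ ENNReal.ofReal (C * h ^ (4 * p))
            * ((∫⁻ ω, (‖ζ ω‖₊ : ℝ≥0∞) ^ (2 * (4 * γ + 1) * p) ∂ℙ)
              + ∫⁻ ω, (‖υ ω‖₊ : ℝ≥0∞) ^ (2 * (4 * γ + 1) * p) ∂ℙ) :=
  midpoint_projection_error_moment_estimate_general d γ p hγ hp
end

section
/- Antithetic second-order Taylor inequality (Lemma 5.2): let d ∈ ℕ (d ≥ 1), K > 0, and let φ : ℝ^d → ℝ be twice continuously differentiable with ‖Dφ(x)‖ ≤ K and ‖D²φ(x)‖ ≤ K for all x ∈ ℝ^d. Then there exists a constant C > 0, depending only on K, such that for every probability space (Ω, ℱ, ℙ) and all measurable u, v, w : Ω → ℝ^d, E[|(φ(u)+φ(v))/2 − φ(w)|²] ≤ C·(E[‖(u+v)/2 − w‖²] + E[‖u−v‖⁴]) (all expectations interpreted in [0,∞]). -/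
open MeasureTheory
open scoped ENNReal

/-! The midpoint `m = (u + v)/2` splits the error into `φ m - φ w`, bounded by `K ‖m - w‖` since
`‖Dφ‖ ≤ K`, and `(φ u + φ v)/2 - φ m`. In the latter the first-order Taylor terms at `m` cancel,
because `u - m = -(v - m)`, and since `Dφ` is `K`-Lipschitz the remainders are `O(K ‖u - v‖²)`.
Squaring with `(x + y)² ≤ 2 (x² + y²)` and integrating gives the claim with `C = 2 K²`. -/

section Taylor

variable {E F : Type*} [NormedAddCommGroup E] [NormedSpace ℝ E]
  [NormedAddCommGroup F] [NormedSpace ℝ F] {f : E → F} {K : ℝ}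

theorem norm_fderiv_sub_fderiv_le_of_norm_iteratedFDeriv_two_le (hf : ContDiff ℝ 2 f)
    (h2 : ∀ x, ‖iteratedFDeriv ℝ 2 f x‖ ≤ K) (x y : E) :
    ‖fderiv ℝ f x - fderiv ℝ f y‖ ≤ K * ‖x - y‖ :=
  convex_univ.norm_image_sub_le_of_norm_fderiv_le
    (fun z _ => (hf.fderiv_right (m := 1) le_rfl).differentiable one_ne_zero z)
    (fun z _ => by rw [← norm_iteratedFDeriv_one, norm_iteratedFDeriv_fderiv]; exact h2 z)
    (Set.mem_univ y) (Set.mem_univ x)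

variable (hf : Differentiable ℝ f) (hK : 0 ≤ K)
  (hLip : ∀ x y, ‖fderiv ℝ f x - fderiv ℝ f y‖ ≤ K * ‖x - y‖)
include hf hK hLip

theorem norm_image_sub_image_sub_fderiv_le_of_lipschitz_fderiv (m p : E) :
    ‖f p - f m - fderiv ℝ f m (p - m)‖ ≤ K * ‖p - m‖ * ‖p - m‖ := by
  refine (convex_closedBall m ‖p - m‖).norm_image_sub_le_of_norm_fderiv_le'
    (fun z _ => hf z) (fun z hz => (hLip z m).trans ?_)
    (Metric.mem_closedBall_self (norm_nonneg _)) (by simp [dist_eq_norm])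
  exact mul_le_mul_of_nonneg_left (by simpa [dist_eq_norm] using hz) hK

theorem norm_midpoint_image_sub_image_midpoint_le (u v : E) :
    ‖(1 / 2 : ℝ) • (f u + f v) - f ((1 / 2 : ℝ) • (u + v))‖ ≤ K / 4 * ‖u - v‖ ^ 2 := by
  set m := (1 / 2 : ℝ) • (u + v)
  set L := fderiv ℝ f m
  have hu : u - m = (1 / 2 : ℝ) • (u - v) := by module
  have hv : v - m = -((1 / 2 : ℝ) • (u - v)) := by module
  have hnorm_u : ‖u - m‖ = ‖u - v‖ / 2 := by
    rw [hu, norm_smul, Real.norm_of_nonneg (by norm_num)]; ring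
  have hnorm_v : ‖v - m‖ = ‖u - v‖ / 2 := by
    rw [hv, norm_neg, norm_smul, Real.norm_of_nonneg (by norm_num)]; ring
  have hsplit : (1 / 2 : ℝ) • (f u + f v) - f m
      = (1 / 2 : ℝ) • ((f u - f m - L (u - m)) + (f v - f m - L (v - m))) := by
    rw [hu, hv, map_neg]; module
  have hru := norm_image_sub_image_sub_fderiv_le_of_lipschitz_fderiv hf hK hLip m u
  have hrv := norm_image_sub_image_sub_fderiv_le_of_lipschitz_fderiv hf hK hLip m v
  rw [hnorm_u] at hru
  rw [hnorm_v] at hrv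
  calc ‖(1 / 2 : ℝ) • (f u + f v) - f m‖
      ≤ 1 / 2 * (‖f u - f m - L (u - m)‖ + ‖f v - f m - L (v - m)‖) := by
        rw [hsplit, norm_smul, Real.norm_of_nonneg (by norm_num)]
        exact mul_le_mul_of_nonneg_left (norm_add_le _ _) (by norm_num)
    _ ≤ 1 / 2 * (K * (‖u - v‖ / 2) * (‖u - v‖ / 2) + K * (‖u - v‖ / 2) * (‖u - v‖ / 2)) := by
        gcongr
    _ = K / 4 * ‖u - v‖ ^ 2 := by ring

theorem norm_midpoint_image_sub_le (h1 : ∀ x, ‖fderiv ℝ f x‖ ≤ K) (u v w : E) :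
    ‖(1 / 2 : ℝ) • (f u + f v) - f w‖
      ≤ K * ‖(1 / 2 : ℝ) • (u + v) - w‖ + K / 4 * ‖u - v‖ ^ 2 := by
  have hmw := convex_univ.norm_image_sub_le_of_norm_fderiv_le (fun x _ => hf x) (fun x _ => h1 x)
    (Set.mem_univ w) (Set.mem_univ ((1 / 2 : ℝ) • (u + v)))
  have hmid := norm_midpoint_image_sub_image_midpoint_le hf hK hLip u v
  linarith [norm_sub_le_norm_sub_add_norm_sub ((1 / 2 : ℝ) • (f u + f v))
    (f ((1 / 2 : ℝ) • (u + v))) (f w)]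

end Taylor

theorem sq_le_two_mul_sq_mul_add_of_le {K a b c : ℝ} (ha : 0 ≤ a)
    (habc : a ≤ K * b + K / 4 * c ^ 2) : a ^ 2 ≤ 2 * K ^ 2 * (b ^ 2 + c ^ 4) :=
  calc a ^ 2 ≤ (K * b + K / 4 * c ^ 2) ^ 2 := pow_le_pow_left₀ ha habc 2
    _ ≤ 2 * ((K * b) ^ 2 + (K / 4 * c ^ 2) ^ 2) := add_sq_le
    _ ≤ 2 * K ^ 2 * (b ^ 2 + c ^ 4) := by nlinarith [sq_nonneg K, pow_two_nonneg (c ^ 2)]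

theorem MeasureTheory.lintegral_le_const_mul_add {Ω : Type*} [MeasurableSpace Ω] {μ : Measure Ω}
    {f g h : Ω → ℝ≥0∞} {C : ℝ≥0∞} (hC : C ≠ ∞) (hg : AEMeasurable g μ)
    (hfgh : ∀ ω, f ω ≤ C * (g ω + h ω)) :
    ∫⁻ ω, f ω ∂μ ≤ C * (∫⁻ ω, g ω ∂μ + ∫⁻ ω, h ω ∂μ) :=
  calc ∫⁻ ω, f ω ∂μ ≤ ∫⁻ ω, C * (g ω + h ω) ∂μ := lintegral_mono hfgh
    _ = C * (∫⁻ ω, g ω ∂μ + ∫⁻ ω, h ω ∂μ) := by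
      rw [lintegral_const_mul' _ _ hC, lintegral_add_left' hg]

/-- Antithetic second-order Taylor inequality (Giles–Szpruch, Lemma 2.2):
for a payoff with bounded first and second derivatives, the antithetic
difference is controlled by the average error and the fourth moment of the
fine/antithetic difference. -/
theorem antithetic_taylor_inequality (K : ℝ) (hK : 0 < K) :
    ∃ C : ℝ, 0 < C ∧
      ∀ (d : ℕ), 1 ≤ d →
      ∀ φ : EuclideanSpace ℝ (Fin d) → ℝ, ContDiff ℝ 2 φ →
        (∀ x, ‖fderiv ℝ φ x‖ ≤ K) →
        (∀ x, ‖iteratedFDeriv ℝ 2 φ x‖ ≤ K) →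
      ∀ (Ω : Type) [MeasurableSpace Ω] (ℙ : Measure Ω) [IsProbabilityMeasure ℙ],
      ∀ u v w : Ω → EuclideanSpace ℝ (Fin d),
        Measurable u → Measurable v → Measurable w →
        (∫⁻ ω, (ENNReal.ofReal |(φ (u ω) + φ (v ω)) / 2 - φ (w ω)|) ^ (2 : ℕ) ∂ℙ)
          ≤ ENNReal.ofReal C
            * ((∫⁻ ω, (‖(1 / 2 : ℝ) • (u ω + v ω) - w ω‖₊ : ℝ≥0∞) ^ (2 : ℕ) ∂ℙ)
              + ∫⁻ ω, (‖u ω - v ω‖₊ : ℝ≥0∞) ^ (4 : ℕ) ∂ℙ) := by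
  refine ⟨2 * K ^ 2, by positivity, fun d _ φ hφ h1 h2 Ω _ ℙ _ u v w hu hv hw => ?_⟩
  have hLip := norm_fderiv_sub_fderiv_le_of_norm_iteratedFDeriv_two_le hφ h2
  have hmeas : Measurable fun ω => (‖(1 / 2 : ℝ) • (u ω + v ω) - w ω‖₊ : ℝ≥0∞) ^ (2 : ℕ) :=
    (((hu.add hv).const_smul (1 / 2 : ℝ)).sub hw).nnnorm.coe_nnreal_ennreal.pow_const 2
  refine lintegral_le_const_mul_add ENNReal.ofReal_ne_top hmeas.aemeasurable fun ω => ?_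
  have hpt := norm_midpoint_image_sub_le (hφ.differentiable (by norm_num)) hK.le hLip h1
    (u ω) (v ω) (w ω)
  rw [Real.norm_eq_abs, smul_eq_mul, one_div_mul_eq_div] at hpt
  rw [← enorm_eq_nnnorm, ← enorm_eq_nnnorm, ← ofReal_norm, ← ofReal_norm,
    ← ENNReal.ofReal_pow (abs_nonneg _), ← ENNReal.ofReal_pow (norm_nonneg _),
    ← ENNReal.ofReal_pow (norm_nonneg _), ← ENNReal.ofReal_add (by positivity) (by positivity),
    ← ENNReal.ofReal_mul (by positivity)]
  exact ENNReal.ofReal_le_ofReal (sq_le_two_mul_sq_mul_add_of_le (abs_nonneg _) hpt)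
end
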